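/- arXiv:2512.20187 — 10 statements merged into one kernel-verified Lean document; each statement's English description precedes it below -/
import Mathlib

section
/- Let R_1, ..., R_m be pairwise non-isomorphic rings, each with exactly two idempotents (0 and 1). Let a be an idempotent of A = R_1^{n_1} × ... × R_m^{n_m}, and fix i ∈ {1,...,m}, j ∈ {1,...,n_i}. Then there is an additive and multiplicative bijection between E_1(a) and E_1(1_{i,j}) if and only if a = 1_{i,k} for some k ∈ {1,...,n_i}. -/
section aux
variable {I : Type*} [DecidableEq I] {f : I → Type*}

lemma single_mul_left' [∀ i, MulZeroClass (f i)] (i : I) (v : f i) (x : ∀ i, f i) :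
    Pi.single i v * x = Pi.single i (v * x i) := by
  funext p
  rcases eq_or_ne p i with rfl | h
  · simp
  · simp [Pi.single_eq_of_ne h]
end aux

section main
variable {m : ℕ} {n : Fin m → ℕ} {R : Fin m → Type*} [∀ i, Ring (R i)]

lemma e_mul' (p : Fin m) (q : Fin (n p)) (x : ∀ i, Fin (n i) → R i) :
    Pi.single p (Pi.single q (1 : R p)) * x = Pi.single p (Pi.single q (x p q)) := by
  have h1 := single_mul_left' (f := fun i' => Fin (n i') → R i') p (Pi.single q (1 : R p)) x
  have h2 := single_mul_left' (f := fun _ : Fin (n p) => R p) q 1 (x p)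
  rw [h1, h2, one_mul]

lemma single_single_mul' (p : Fin m) (q : Fin (n p)) (r s : R p) :
    (Pi.single p (Pi.single q r) : ∀ i', Fin (n i') → R i') * Pi.single p (Pi.single q s)
      = Pi.single p (Pi.single q (r * s)) := by
  have h1 := single_mul_left' (f := fun i' => Fin (n i') → R i') p (Pi.single q r) (Pi.single p (Pi.single q s))
  have h2 := single_mul_left' (f := fun _ : Fin (n p) => R p) q r (Pi.single q s)
  rw [h1, Pi.single_eq_same, h2, Pi.single_eq_same]

lemma mem_single' (p : Fin m) (q : Fin (n p)) (c : R p) :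
    (Pi.single p (Pi.single q (1 : R p)) : ∀ i', Fin (n i') → R i') * Pi.single p (Pi.single q c)
      = Pi.single p (Pi.single q c) := by
  rw [e_mul']; simp
end main

/-- With `R 1, ..., R m` pairwise non-isomorphic rings, each having
exactly two idempotents, `A = ∏ i, (R i)^(n i)`, `a` an idempotent of `A`, and
`1_{i,j}` as usual: there is an additive and multiplicative bijection between
`E₁(a)` and `E₁(1_{i,j})` if and only if `a = 1_{i,k}` for some `k`. -/
theorem stmt4 {m : ℕ} (n : Fin m → ℕ) (R : Fin m → Type*) [∀ i, Ring (R i)]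
    [∀ i, Nontrivial (R i)]
    (hR : ∀ i, ∀ e : R i, IsIdempotentElem e → e = 0 ∨ e = 1)
    (hiso : ∀ i i', Nonempty (R i ≃+* R i') → i = i')
    (a : ∀ i, Fin (n i) → R i) (ha : IsIdempotentElem a)
    (i : Fin m) (j : Fin (n i)) :
    (∃ f : (∀ i', Fin (n i') → R i') → (∀ i', Fin (n i') → R i'),
        (∀ x y, a * x = x → a * y = y → f (x + y) = f x + f y) ∧
        (∀ x y, a * x = x → a * y = y → f (x * y) = f x * f y) ∧
        Set.BijOn f {x | a * x = x}
          {x | Pi.single i (Pi.single j (1 : R i)) * x = x}) ↔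
      ∃ k : Fin (n i), a = Pi.single i (Pi.single k (1 : R i)) := by
  constructor
  · rintro ⟨f, hadd, hmul, hmaps, hinj, hsurj⟩
    -- components of a are idempotent
    have hac : ∀ p q, a p q = 0 ∨ a p q = 1 := by
      intro p q
      exact hR p (a p q) (congrFun (congrFun ha p) q)
    have h0S : a * 0 = 0 := mul_zero a
    have f0 : f 0 = 0 := by
      have h := hadd 0 0 h0S h0S
      rw [add_zero] at h
      have h2 : f 0 + f 0 = f 0 + 0 := by rw [add_zero]; exact h.symm
      exact add_left_cancel h2
    -- membership characterization in T
    have memT : ∀ y : ∀ i', Fin (n i') → R i',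
        Pi.single i (Pi.single j (1 : R i)) * y = y →
        y = Pi.single i (Pi.single j (y i j)) := by
      intro y hy
      conv_lhs => rw [← hy, e_mul']
    -- idempotents of T are 0 and e i j
    have Tclass : ∀ y : ∀ i', Fin (n i') → R i',
        Pi.single i (Pi.single j (1 : R i)) * y = y → y * y = y →
        y = 0 ∨ y = Pi.single i (Pi.single j (1 : R i)) := by
      intro y hy hyy
      have hc : (y i j) * (y i j) = y i j := congrFun (congrFun hyy i) j
      rcases hR i _ hc with h0 | h1
      · left; rw [memT y hy, h0]; simp
      · right; rw [memT y hy, h1]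
    -- a ≠ 0
    have hane : a ≠ 0 := by
      intro h
      obtain ⟨x, hxS, hfx⟩ := hsurj (mem_single' i j 1)
      have hx0 : x = 0 := by
        have hx : a * x = x := hxS
        rw [h, zero_mul] at hx
        exact hx.symm
      rw [hx0, f0] at hfx
      have := congrFun (congrFun hfx i) j
      simp at this
    -- a has a coordinate equal to 1
    have hex : ∃ p, ∃ q, a p q = 1 := by
      by_contra h
      push_neg at h
      apply hane
      funext p q
      rcases hac p q with h0 | h1
      · simpa using h0
      · exact absurd h1 (h p q)
    obtain ⟨p, q, hpq⟩ := hex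
    -- coordinate singles are in S
    have memS1 : ∀ (r : Fin m) (s : Fin (n r)), a r s = 1 →
        a * Pi.single r (Pi.single s (1 : R r)) = Pi.single r (Pi.single s 1) := by
      intro r s h1
      funext u
      rcases eq_or_ne u r with rfl | hu
      · funext v
        rcases eq_or_ne v s with rfl | hv
        · simp [Pi.mul_apply, h1]
        · simp [Pi.mul_apply, Pi.single_eq_of_ne hv]
      · simp [Pi.mul_apply, Pi.single_eq_of_ne hu]
    -- nonzero idempotents of S map to e i j
    have fne : ∀ x : ∀ i', Fin (n i') → R i', a * x = x → x * x = x → x ≠ 0 →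
        f x = Pi.single i (Pi.single j (1 : R i)) := by
      intro x hxS hxx hx0
      have h1 : Pi.single i (Pi.single j (1 : R i)) * f x = f x := hmaps hxS
      have h2 : f x * f x = f x := by rw [← hmul x x hxS hxS, hxx]
      rcases Tclass _ h1 h2 with h | h
      · exact absurd (hinj hxS h0S (by rw [h, f0])) hx0
      · exact h
    -- uniqueness of the coordinate
    have key : ∀ (r : Fin m) (s : Fin (n r)), a r s = 1 →
        (Pi.single r (Pi.single s (1 : R r)) : ∀ i', Fin (n i') → R i')
          = Pi.single p (Pi.single q (1 : R p)) := by
      intro r s h1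
      have hb1 : (Pi.single r (Pi.single s (1 : R r)) : ∀ i', Fin (n i') → R i') ≠ 0 := by
        intro h
        have := congrFun (congrFun h r) s
        simp at this
      have hb2 : (Pi.single p (Pi.single q (1 : R p)) : ∀ i', Fin (n i') → R i') ≠ 0 := by
        intro h
        have := congrFun (congrFun h p) q
        simp at this
      have e1 := fne _ (memS1 r s h1) (mem_single' r s 1) hb1
      have e2 := fne _ (memS1 p q hpq) (mem_single' p q 1) hb2
      exact hinj (memS1 r s h1) (memS1 p q hpq) (e1.trans e2.symm)
    -- a is a coordinate single
    have ha' : a = Pi.single p (Pi.single q (1 : R p)) := by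
      funext u v
      rcases hac u v with h0 | h1
      · rcases eq_or_ne u p with rfl | hu
        · rcases eq_or_ne v q with rfl | hv
          · rw [hpq] at h0; exact absurd h0 one_ne_zero
          · rw [h0]; simp [Pi.single_eq_of_ne hv]
        · rw [h0]; simp [Pi.single_eq_of_ne hu]
      · rw [h1]
        simpa using congrFun (congrFun (key u v h1) u) v
    -- singles at (p,q) are in S
    have memS : ∀ c : R p, a * Pi.single p (Pi.single q c) = Pi.single p (Pi.single q c) := by
      intro c; rw [ha']; exact mem_single' p q c
    have fa : f a = Pi.single i (Pi.single j (1 : R i)) := by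
      refine fne a ha ha ?_
      intro h
      rw [h] at hpq
      simp at hpq
    have hmemT' : ∀ x : ∀ i', Fin (n i') → R i', a * x = x →
        f x = Pi.single i (Pi.single j (f x i j)) := fun x hx => memT _ (hmaps hx)
    -- build a ring isomorphism R p ≃+* R i
    have hne : Nonempty (R p ≃+* R i) := by
      refine ⟨RingEquiv.ofBijective (RingHom.mk'
        { toFun := fun r => f (Pi.single p (Pi.single q r)) i j
          map_one' := ?_
          map_mul' := ?_ } ?_) ⟨?_, ?_⟩⟩
      · show f (Pi.single p (Pi.single q (1 : R p))) i j = 1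
        rw [← ha', fa]
        simp
      · intro r s
        show f (Pi.single p (Pi.single q (r * s))) i j
          = f (Pi.single p (Pi.single q r)) i j * f (Pi.single p (Pi.single q s)) i j
        rw [← single_single_mul', hmul _ _ (memS r) (memS s), Pi.mul_apply, Pi.mul_apply]
      · intro r s
        show f (Pi.single p (Pi.single q (r + s))) i j
          = f (Pi.single p (Pi.single q r)) i j + f (Pi.single p (Pi.single q s)) i j
        rw [Pi.single_add, Pi.single_add, hadd _ _ (memS r) (memS s), Pi.add_apply, Pi.add_apply]
      · intro r s h
        have h' : f (Pi.single p (Pi.single q r)) i j = f (Pi.single p (Pi.single q s)) i j := h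
        have hr := hmemT' _ (memS r)
        have hs := hmemT' _ (memS s)
        have heq : f (Pi.single p (Pi.single q r)) = f (Pi.single p (Pi.single q s)) := by
          rw [hr, hs, h']
        have h2 := hinj (memS r) (memS s) heq
        have h3 := congrFun (congrFun h2 p) q
        simpa using h3
      · intro c
        obtain ⟨x, hxS, hfx⟩ := hsurj (mem_single' i j c)
        have hxS' : a * x = x := hxS
        refine ⟨x p q, ?_⟩
        have hx' : x = Pi.single p (Pi.single q (x p q)) := by
          conv_lhs => rw [← hxS', ha', e_mul']
        show f (Pi.single p (Pi.single q (x p q))) i j = c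
        rw [← hx', hfx]
        simp
    have hpi : p = i := hiso p i hne
    subst hpi
    exact ⟨q, ha'⟩
  · rintro ⟨k, rfl⟩
    refine ⟨fun x => Pi.single i (Pi.single j (x i k)), ?_, ?_, ?_, ?_, ?_⟩
    · intro x y _ _
      show (Pi.single i (Pi.single j ((x + y) i k)) : ∀ i', Fin (n i') → R i')
        = Pi.single i (Pi.single j (x i k)) + Pi.single i (Pi.single j (y i k))
      rw [Pi.add_apply, Pi.add_apply, Pi.single_add, Pi.single_add]
    · intro x y _ _
      show (Pi.single i (Pi.single j ((x * y) i k)) : ∀ i', Fin (n i') → R i')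
        = Pi.single i (Pi.single j (x i k)) * Pi.single i (Pi.single j (y i k))
      rw [single_single_mul', Pi.mul_apply, Pi.mul_apply]
    · intro x _
      exact mem_single' i j (x i k)
    · intro x hx y hy h
      have hx' : Pi.single i (Pi.single k (1 : R i)) * x = x := hx
      have hy' : Pi.single i (Pi.single k (1 : R i)) * y = y := hy
      have hc : x i k = y i k := by
        have := congrFun (congrFun h i) j
        simpa using this
      rw [← hx', ← hy', e_mul', e_mul', hc]
    · intro y hy
      have hy' : Pi.single i (Pi.single j (1 : R i)) * y = y := hy
      refine ⟨Pi.single i (Pi.single k (y i j)), mem_single' i k (y i j), ?_⟩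
      show (Pi.single i (Pi.single j ((Pi.single i (Pi.single k (y i j)) : ∀ i', Fin (n i') → R i') i k)) : ∀ i', Fin (n i') → R i') = y
      conv_rhs => rw [← hy', e_mul']
      simp
end

section
/- Let R_1, ..., R_m be pairwise non-isomorphic rings, each with exactly two idempotents. If R_1^{n_1} × ... × R_m^{n_m} is ring-isomorphic to R_1^{n_1'} × ... × R_m^{n_m'} (with all n_i, n_i' ≥ 0), then n_i = n_i' for every i = 1, ..., m. -/
section Aux

variable {m : ℕ} {n : Fin m → ℕ} {R : Fin m → Type*} [∀ i, Ring (R i)]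

/-- Element of the big product supported at a single coordinate. -/
noncomputable def sing (j : Σ i, Fin (n i)) (x : R j.1) : ∀ i, Fin (n i) → R i :=
  Pi.single j.1 (Pi.single j.2 x)

lemma sing_same (j : Σ i, Fin (n i)) (x : R j.1) : sing j x j.1 j.2 = x := by
  simp [sing]

lemma sing_ne (j : Σ i, Fin (n i)) (x : R j.1) {i : Fin m} {a : Fin (n i)}
    (h : (⟨i, a⟩ : Σ i, Fin (n i)) ≠ j) : sing j x i a = 0 := by
  rcases eq_or_ne i j.1 with hi | hi
  · subst hi
    have ha : a ≠ j.2 := by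
      intro h'
      exact h (by rw [h', Sigma.eta])
    simp [sing, Pi.single_eq_same, Pi.single_eq_of_ne ha]
  · simp [sing, Pi.single_eq_of_ne hi]

lemma sing_mul (j : Σ i, Fin (n i)) (x y : R j.1) :
    sing j x * sing j y = sing j (x * y) := by
  funext i a
  show sing j x i a * sing j y i a = sing j (x * y) i a
  by_cases h : (⟨i, a⟩ : Σ i, Fin (n i)) = j
  · subst h
    rw [sing_same, sing_same, sing_same]
  · rw [sing_ne _ _ h, sing_ne _ _ h, sing_ne _ _ h, zero_mul]

lemma sing_add (j : Σ i, Fin (n i)) (x y : R j.1) :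
    sing j x + sing j y = sing j (x + y) := by
  funext i a
  show sing j x i a + sing j y i a = sing j (x + y) i a
  by_cases h : (⟨i, a⟩ : Σ i, Fin (n i)) = j
  · subst h
    rw [sing_same, sing_same, sing_same]
  · rw [sing_ne _ _ h, sing_ne _ _ h, sing_ne _ _ h, zero_add]

lemma eq_sing (t : ∀ i, Fin (n i) → R i) (j : Σ i, Fin (n i))
    (h : ∀ i a, (⟨i, a⟩ : Σ i, Fin (n i)) ≠ j → t i a = 0) :
    t = sing j (t j.1 j.2) := by
  funext i a
  by_cases hj : (⟨i, a⟩ : Σ i, Fin (n i)) = j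
  · subst hj
    exact (sing_same ⟨i, a⟩ (t i a)).symm
  · rw [sing_ne _ _ hj, h i a hj]

lemma sing_zero (j : Σ i, Fin (n i)) : sing j (0 : R j.1) = 0 := by
  funext i a
  by_cases h : (⟨i, a⟩ : Σ i, Fin (n i)) = j
  · subst h; exact sing_same _ _
  · exact sing_ne _ _ h

lemma e_ne_zero [∀ i, Nontrivial (R i)] (j : Σ i, Fin (n i)) :
    sing j (1 : R j.1) ≠ 0 := by
  intro h0
  have h1 : (1 : R j.1) = 0 := by
    conv_lhs => rw [← sing_same j (1 : R j.1)]
    rw [h0]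
    rfl
  exact one_ne_zero h1

lemma e_inj [∀ i, Nontrivial (R i)] {j k : Σ i, Fin (n i)}
    (h : sing j (1 : R j.1) = sing k (1 : R k.1)) : j = k := by
  by_contra hne
  have h1 : (⟨j.1, j.2⟩ : Σ i, Fin (n i)) ≠ k := by rw [Sigma.eta]; exact hne
  have h2 := sing_same j (1 : R j.1)
  rw [h, sing_ne _ _ h1] at h2
  exact zero_ne_one h2

end Aux

/-- Key lemma: a ring iso between the two products maps each standard primitive
idempotent to a standard primitive idempotent. -/
lemma key {m : ℕ} {n n' : Fin m → ℕ} {R : Fin m → Type*} [∀ i, Ring (R i)]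
    [∀ i, Nontrivial (R i)]
    (hR : ∀ i, ∀ e : R i, IsIdempotentElem e → e = 0 ∨ e = 1)
    (φ : (∀ i, Fin (n i) → R i) ≃+* ∀ i, Fin (n' i) → R i)
    (j : Σ i, Fin (n i)) :
    ∃ k : Σ i, Fin (n' i), φ (sing j (1 : R j.1)) = sing k (1 : R k.1) := by
  set t := φ (sing j (1 : R j.1)) with ht
  have hee : sing j (1 : R j.1) * sing j 1 = sing j 1 := by
    rw [sing_mul, one_mul]
  have htt : t * t = t := by rw [ht, ← map_mul, hee]
  have htne : t ≠ 0 := by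
    intro h0
    exact e_ne_zero j (φ.injective (by rw [map_zero, ← ht, h0]))
  -- find a coordinate where t is nonzero
  have hk : ∃ k : Σ i, Fin (n' i), t k.1 k.2 ≠ 0 := by
    by_contra hc
    push_neg at hc
    exact htne (funext fun i => funext fun a => hc ⟨i, a⟩)
  obtain ⟨k, hk0⟩ := hk
  have hcomp : ∀ (i : Fin m) (a : Fin (n' i)), t i a = 0 ∨ t i a = 1 := fun i a =>
    hR i (t i a) (show t i a * t i a = t i a from by
      conv_rhs => rw [← htt]
      rfl)
  have hk1 : t k.1 k.2 = 1 := (hcomp k.1 k.2).resolve_left hk0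
  -- e' k = e' k * t
  have hek : sing k (1 : R k.1) * t = sing k 1 := by
    funext i a
    show sing k (1 : R k.1) i a * t i a = sing k 1 i a
    by_cases h : (⟨i, a⟩ : Σ i, Fin (n' i)) = k
    · subst h
      rw [sing_same, one_mul]
      exact hk1
    · rw [sing_ne _ _ h, zero_mul]
  -- pull back
  set s := φ.symm (sing k (1 : R k.1)) with hs
  have hsej : s * sing j (1 : R j.1) = s := by
    have h2 : φ.symm (sing k (1 : R k.1) * t) = φ.symm (sing k 1) := by rw [hek]
    rw [map_mul, ht, φ.symm_apply_apply] at h2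
    rw [hs]
    exact h2
  have hssupp : ∀ i a, (⟨i, a⟩ : Σ i, Fin (n i)) ≠ j → s i a = 0 := by
    intro i a hne
    have h3 : (s * sing j (1 : R j.1)) i a = s i a := by rw [hsej]
    rw [show (s * sing j (1 : R j.1)) i a = s i a * sing j 1 i a from rfl,
      sing_ne _ _ hne, mul_zero] at h3
    exact h3.symm
  have hseq : s = sing j (s j.1 j.2) := eq_sing s j hssupp
  have hkk : sing k (1 : R k.1) * sing k 1 = sing k 1 := by
    rw [sing_mul, one_mul]
  have hss : s * s = s := by rw [hs, ← map_mul, hkk]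
  have hsc : s j.1 j.2 = 0 ∨ s j.1 j.2 = 1 :=
    hR j.1 (s j.1 j.2) (show s j.1 j.2 * s j.1 j.2 = s j.1 j.2 from by
      conv_rhs => rw [← hss]
      rfl)
  have hsne : s ≠ 0 := by
    intro h0
    exact e_ne_zero k (φ.symm.injective (by rw [map_zero, ← hs, h0]))
  rcases hsc with h0 | h1
  · exfalso
    rw [h0, sing_zero] at hseq
    exact hsne hseq
  · refine ⟨k, ?_⟩
    rw [h1] at hseq
    have h4 : φ s = sing k (1 : R k.1) := by rw [hs, φ.apply_symm_apply]
    rw [hseq] at h4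
    exact h4

/-- Fiber of the sigma type over `i` is `Fin (n i)`. -/
def fib {m : ℕ} {n : Fin m → ℕ} (i : Fin m) :
    {j : Σ i, Fin (n i) // j.1 = i} ≃ Fin (n i) where
  toFun j := j.2 ▸ j.1.2
  invFun a := ⟨⟨i, a⟩, rfl⟩
  left_inv := by rintro ⟨⟨i', a⟩, rfl⟩; rfl
  right_inv a := rfl

/-- If `R 1, ..., R m` are pairwise non-isomorphic rings each with
exactly two idempotents, and `∏ i, (R i)^(n i)` is ring-isomorphic to
`∏ i, (R i)^(n' i)`, then `n i = n' i` for every `i`. -/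
theorem stmt5 {m : ℕ} (n n' : Fin m → ℕ) (R : Fin m → Type*) [∀ i, Ring (R i)]
    [∀ i, Nontrivial (R i)]
    (hR : ∀ i, ∀ e : R i, IsIdempotentElem e → e = 0 ∨ e = 1)
    (hiso : ∀ i i', Nonempty (R i ≃+* R i') → i = i')
    (h : Nonempty ((∀ i, Fin (n i) → R i) ≃+* ∀ i, Fin (n' i) → R i)) :
    n = n' := by
  obtain ⟨φ⟩ := h
  choose σ hσ using fun j => key hR φ j
  choose τ hτ using fun k => key hR φ.symm k
  have hτσ : ∀ j, τ (σ j) = j := by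
    intro j
    have h2 : sing (τ (σ j)) (1 : R (τ (σ j)).1) = sing j (1 : R j.1) := by
      rw [← hτ (σ j), ← hσ j, φ.symm_apply_apply]
    exact e_inj h2
  have hστ : ∀ k, σ (τ k) = k := by
    intro k
    have h2 : sing (σ (τ k)) (1 : R (σ (τ k)).1) = sing k (1 : R k.1) := by
      rw [← hσ (τ k), ← hτ k, φ.apply_symm_apply]
    exact e_inj h2
  have hfst : ∀ j, (σ j).1 = j.1 := by
    intro j
    set k := σ j with hkdef
    -- support facts
    have hφj : φ (sing j (1 : R j.1)) = sing k (1 : R k.1) := hσ j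
    have hφk : φ.symm (sing k (1 : R k.1)) = sing j (1 : R j.1) := by
      rw [← hφj, φ.symm_apply_apply]
    have hsupp : ∀ x : R j.1, φ (sing j x) = sing k (φ (sing j x) k.1 k.2) := by
      intro x
      refine eq_sing _ _ ?_
      intro i a hne
      have h1 : sing j x * sing j (1 : R j.1) = sing j x := by
        rw [sing_mul, mul_one]
      have h2 : φ (sing j x) * sing k (1 : R k.1) = φ (sing j x) := by
        rw [← hφj, ← map_mul, h1]
      have h3 : (φ (sing j x) * sing k (1 : R k.1)) i a = φ (sing j x) i a := by
        rw [h2]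
      rw [show (φ (sing j x) * sing k (1 : R k.1)) i a
          = φ (sing j x) i a * sing k 1 i a from rfl,
        sing_ne _ _ hne, mul_zero] at h3
      exact h3.symm
    have hsupp' : ∀ y : R k.1,
        φ.symm (sing k y) = sing j (φ.symm (sing k y) j.1 j.2) := by
      intro y
      refine eq_sing _ _ ?_
      intro i a hne
      have h1 : sing k y * sing k (1 : R k.1) = sing k y := by
        rw [sing_mul, mul_one]
      have h2 : φ.symm (sing k y) * sing j (1 : R j.1) = φ.symm (sing k y) := by
        rw [← hφk, ← map_mul, h1]
      have h3 : (φ.symm (sing k y) * sing j (1 : R j.1)) i a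
          = φ.symm (sing k y) i a := by rw [h2]
      rw [show (φ.symm (sing k y) * sing j (1 : R j.1)) i a
          = φ.symm (sing k y) i a * sing j 1 i a from rfl,
        sing_ne _ _ hne, mul_zero] at h3
      exact h3.symm
    have ψ : R j.1 ≃+* R k.1 :=
      { toFun := fun x => φ (sing j x) k.1 k.2
        invFun := fun y => φ.symm (sing k y) j.1 j.2
        left_inv := by
          intro x
          show φ.symm (sing k (φ (sing j x) k.1 k.2)) j.1 j.2 = x
          rw [← hsupp x, φ.symm_apply_apply, sing_same]
        right_inv := by
          intro y
          show φ (sing j (φ.symm (sing k y) j.1 j.2)) k.1 k.2 = y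
          rw [← hsupp' y, φ.apply_symm_apply, sing_same]
        map_mul' := by
          intro x y
          show φ (sing j (x * y)) k.1 k.2
            = φ (sing j x) k.1 k.2 * φ (sing j y) k.1 k.2
          rw [← sing_mul, map_mul]
          rfl
        map_add' := by
          intro x y
          show φ (sing j (x + y)) k.1 k.2
            = φ (sing j x) k.1 k.2 + φ (sing j y) k.1 k.2
          rw [← sing_add, map_add]
          rfl }
    exact (hiso j.1 k.1 ⟨ψ⟩).symm
  -- build the global equiv and count fibers
  funext i
  have e1 : {j : Σ i, Fin (n i) // j.1 = i} ≃ {k : Σ i, Fin (n' i) // k.1 = i} :=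
    Equiv.subtypeEquiv ⟨σ, τ, hτσ, hστ⟩ (fun j => by
      simp only [Equiv.coe_fn_mk]
      rw [hfst j])
  calc n i = Fintype.card {j : Σ i, Fin (n i) // j.1 = i} := by
        rw [Fintype.card_congr (fib i), Fintype.card_fin]
    _ = Fintype.card {k : Σ i, Fin (n' i) // k.1 = i} := Fintype.card_congr e1
    _ = n' i := by rw [Fintype.card_congr (fib i), Fintype.card_fin]
end

section
/- Let R be a ring whose only idempotents are 0 and 1, and n ≥ 1. Then every ring automorphism of R^n permutes the n factors; that is, the natural map Θ : Aut(R) ≀ S_n → Aut(R^n), ((f_1,...,f_n), σ) ↦ ((b_1,...,b_n) ↦ (f_1(b_{σ⁻¹(1)}),...,f_n(b_{σ⁻¹(n)}))), is a group isomorphism. -/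
private lemma psingle_mul {R : Type*} [Ring R] {n : ℕ} (j : Fin n) (r s : R) :
    Pi.single j (r * s) = (Pi.single j r : Fin n → R) * Pi.single j s := by
  funext i
  by_cases h : i = j <;> simp [Pi.single_apply, h]

private lemma psingle_one_mul {R : Type*} [Ring R] {n : ℕ} (k : Fin n) (y : Fin n → R) :
    Pi.single k (1 : R) * y = Pi.single k (y k) := by
  funext i
  by_cases h : i = k <;> simp [Pi.single_apply, h]

/-- If `F` sends `e_j` to `e_k`, then `F` maps the `j`-th factor into the `k`-th factor. -/
private lemma support_lemma {R : Type*} [Ring R] {n : ℕ} (F : RingAut (Fin n → R))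
    {j k : Fin n} (h : F (Pi.single j 1) = Pi.single k 1) (r : R) :
    F (Pi.single j r) = Pi.single k (F (Pi.single j r) k) := by
  have h1 : Pi.single j (r : R) = (Pi.single j (1 : R) : Fin n → R) * Pi.single j r := by
    rw [psingle_one_mul, Pi.single_eq_same]
  calc F (Pi.single j r) = F (Pi.single j 1 * Pi.single j r) := by rw [← h1]
    _ = Pi.single k 1 * F (Pi.single j r) := by rw [map_mul, h]
    _ = Pi.single k (F (Pi.single j r) k) := psingle_one_mul _ _

/-- The automorphism `Θ((f₁,…,fₙ), σ)` of `R^n`, sending `b` to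
`i ↦ fᵢ (b (σ⁻¹ i))`. -/
def wreathTheta {R : Type*} [Ring R] {n : ℕ} (f : Fin n → RingAut R)
    (σ : Equiv.Perm (Fin n)) : RingAut (Fin n → R) where
  toFun x := fun i => f i (x (σ⁻¹ i))
  invFun y := fun i => (f (σ i)).symm (y (σ i))
  left_inv x := by funext i; simp
  right_inv y := by funext i; simp
  map_add' x y := by funext i; simp
  map_mul' x y := by funext i; simp

/-- If `R` is a ring whose only idempotents are `0` and `1` and `n ≥ 1`,
then every ring automorphism of `R^n` permutes the factors: the natural map
`Θ : Aut(R) ≀ Sₙ → Aut(R^n)` is a group isomorphism (a bijective homomorphism for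
the wreath product law `((f,σ)·(g,τ)) = ((i ↦ fᵢ ∘ g (σ⁻¹ i)), στ)`). -/
theorem stmt7 {R : Type*} [Ring R] [Nontrivial R]
    (hR : ∀ e : R, IsIdempotentElem e → e = 0 ∨ e = 1)
    (n : ℕ) (hn : 1 ≤ n) :
    (∀ (f g : Fin n → RingAut R) (σ τ : Equiv.Perm (Fin n)),
        wreathTheta (fun i => f i * g (σ⁻¹ i)) (σ * τ) =
          wreathTheta f σ * wreathTheta g τ) ∧
    (∀ (f g : Fin n → RingAut R) (σ τ : Equiv.Perm (Fin n)),
        wreathTheta f σ = wreathTheta g τ → f = g ∧ σ = τ) ∧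
    (∀ F : RingAut (Fin n → R), ∃ (f : Fin n → RingAut R) (σ : Equiv.Perm (Fin n)),
        F = wreathTheta f σ) := by
  refine ⟨?_, ?_, ?_⟩
  · -- homomorphism law
    intro f g σ τ
    ext x : 1
    rfl
  · -- injectivity
    intro f g σ τ h
    have h' : ∀ x : Fin n → R, ∀ i, f i (x (σ⁻¹ i)) = g i (x (τ⁻¹ i)) := by
      intro x i
      have := congrArg (fun (e : RingAut (Fin n → R)) => e x i) h
      exact this
    have hστ : σ = τ := by
      have hinv : σ⁻¹ = τ⁻¹ := by
        refine Equiv.ext fun i => ?_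
        by_contra hc
        have := h' (Pi.single (σ⁻¹ i) 1) i
        rw [Pi.single_eq_same, map_one, Pi.single_eq_of_ne (Ne.symm hc), map_zero] at this
        exact one_ne_zero this
      simpa using congrArg (·⁻¹) hinv
    refine ⟨?_, hστ⟩
    funext i
    ext r
    have := h' (Pi.single (σ⁻¹ i) r) i
    rwa [Pi.single_eq_same, ← hστ, Pi.single_eq_same] at this
  · -- surjectivity
    intro F
    set u : Fin n → Fin n → R := fun j => F (Pi.single j 1) with hu
    have hidem : ∀ j i, u j i = 0 ∨ u j i = 1 := by
      intro j i
      apply hR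
      have : u j * u j = u j := by
        rw [hu]
        simp only [← map_mul]
        congr 1
        rw [psingle_one_mul, Pi.single_eq_same]
      exact congrFun this i
    have horth : ∀ j k, j ≠ k → u j * u k = 0 := by
      intro j k hjk
      rw [hu]
      simp only [← map_mul]
      rw [psingle_one_mul, Pi.single_eq_of_ne hjk, Pi.single_zero, map_zero]
    have hsum : ∑ j, u j = 1 := by
      rw [hu, ← map_sum]
      have h1 : ∑ x : Fin n, Pi.single x (1 : R) = 1 := by
        simpa using Finset.univ_sum_single (1 : Fin n → R)
      rw [h1, map_one]
    -- for each i there is a unique j with u j i = 1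
    have hex : ∀ i : Fin n, ∃ j, u j i = 1 := by
      intro i
      by_contra hc
      push_neg at hc
      have : ∀ j, u j i = 0 := fun j => (hidem j i).resolve_right (hc j)
      have h1 : (1 : Fin n → R) i = 0 := by
        rw [← hsum]; simpa [Finset.sum_apply] using Finset.sum_eq_zero (fun j _ => this j)
      exact one_ne_zero h1
    have huniq : ∀ i j k, u j i = 1 → u k i = 1 → j = k := by
      intro i j k hj hk
      by_contra hc
      have := congrFun (horth j k hc) i
      rw [Pi.mul_apply, hj, hk, one_mul] at this
      exact one_ne_zero this
    let t : Fin n → Fin n := fun i => (hex i).choose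
    have ht : ∀ i, u (t i) i = 1 := fun i => (hex i).choose_spec
    have htsurj : Function.Surjective t := by
      intro j
      have hne : u j ≠ 0 := by
        intro h0
        have := F.injective (a₁ := Pi.single j 1) (a₂ := 0) (by rw [map_zero]; exact h0)
        have := congrFun this j
        rw [Pi.single_eq_same] at this
        exact one_ne_zero this
      obtain ⟨i, hi⟩ := Function.ne_iff.mp hne
      have : u j i = 1 := (hidem j i).resolve_left hi
      exact ⟨i, huniq i (t i) j (ht i) this⟩
    have htbij : Function.Bijective t := Finite.surjective_iff_bijective.mp htsurj
    let τ : Equiv.Perm (Fin n) := Equiv.ofBijective t htbij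
    let π : Equiv.Perm (Fin n) := τ.symm
    have hπ : ∀ j, F (Pi.single j 1) = Pi.single (π j) 1 := by
      intro j
      funext i
      show u j i = _
      by_cases h : i = π j
      · subst h
        rw [Pi.single_eq_same]
        have h2 : t (π j) = j := τ.apply_symm_apply j
        have h3 := ht (π j)
        rwa [h2] at h3
      · rw [Pi.single_eq_of_ne h]
        rcases hidem j i with h0 | h1
        · exact h0
        · exfalso
          apply h
          have : t i = j := huniq i (t i) j (ht i) h1
          have : τ i = j := this
          rw [← this, Equiv.symm_apply_apply]
    have hπ' : ∀ i, F.symm (Pi.single i 1) = Pi.single (π.symm i) 1 := by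
      intro i
      have := hπ (π.symm i)
      rw [Equiv.apply_symm_apply] at this
      rw [← this, RingEquiv.symm_apply_apply]
    have key : ∀ j r, F (Pi.single j r) = Pi.single (π j) (F (Pi.single j r) (π j)) :=
      fun j r => support_lemma F (hπ j) r
    have key' : ∀ i r, F.symm (Pi.single i r) =
        Pi.single (π.symm i) (F.symm (Pi.single i r) (π.symm i)) :=
      fun i r => support_lemma F.symm (hπ' i) r
    let f : Fin n → RingAut R := fun i =>
      { toFun := fun r => F (Pi.single (π.symm i) r) i
        invFun := fun r => F.symm (Pi.single i r) (π.symm i)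
        left_inv := by
          intro r
          dsimp only
          have hk := key (π.symm i) r
          rw [Equiv.apply_symm_apply] at hk
          rw [← hk, RingEquiv.symm_apply_apply, Pi.single_eq_same]
        right_inv := by
          intro r
          dsimp only
          have hk := key' i r
          rw [← hk, RingEquiv.apply_symm_apply, Pi.single_eq_same]
        map_add' := by
          intro r s
          show F (Pi.single (π.symm i) (r + s)) i = F (Pi.single (π.symm i) r) i + F (Pi.single (π.symm i) s) i
          rw [Pi.single_add, map_add]
          rfl
        map_mul' := by
          intro r s
          show F (Pi.single (π.symm i) (r * s)) i = F (Pi.single (π.symm i) r) i * F (Pi.single (π.symm i) s) i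
          rw [psingle_mul, map_mul]
          rfl }
    refine ⟨f, π, ?_⟩
    ext x : 1
    funext i
    show F x i = f i (x (π⁻¹ i))
    have hx : x = ∑ j, Pi.single j (x j) := (Finset.univ_sum_single x).symm
    calc F x i = (∑ j, F (Pi.single j (x j))) i := by rw [← map_sum, ← hx]
      _ = ∑ j, F (Pi.single j (x j)) i := by rw [Finset.sum_apply]
      _ = F (Pi.single (π.symm i) (x (π.symm i))) i := by
          apply Finset.sum_eq_single
          · intro j _ hj
            rw [key j (x j), Pi.single_eq_of_ne]
            intro hc
            exact hj (by rw [hc, Equiv.symm_apply_apply])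
          · intro hmem
            exact absurd (Finset.mem_univ _) hmem
      _ = f i (x (π⁻¹ i)) := rfl
end

section
/- Let R_1, ..., R_m be pairwise non-isomorphic rings, each with exactly two idempotents, and let A = R_1^{n_1} × ... × R_m^{n_m}. Then any ring automorphism f of A stabilizes each factor R_i^{n_i}, and the map f ↦ (f|_{R_1^{n_1}}, ..., f|_{R_m^{n_m}}) gives a group isomorphism Aut(A) ≅ Aut(R_1^{n_1}) × ... × Aut(R_m^{n_m}). -/
namespace Stmt8Aux

variable {m : ℕ} {n : Fin m → ℕ} {R : Fin m → Type*} [∀ i, Ring (R i)]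

/-- The element of `∏ i, (R i)^(n i)` supported at coordinate `(i, j)` with value `r`. -/
def sglr (i : Fin m) (j : Fin (n i)) (r : R i) : ∀ i, Fin (n i) → R i :=
  Pi.single i (Pi.single j r)

lemma mul_apply2 (x y : ∀ i, Fin (n i) → R i) (i : Fin m) (j : Fin (n i)) :
    (x * y) i j = x i j * y i j := rfl

lemma sglr_apply_same (i : Fin m) (j j' : Fin (n i)) (r : R i) :
    sglr i j r i j' = if j' = j then r else 0 := by
  simp [sglr, Pi.single_apply]

lemma sglr_apply_self (i : Fin m) (j : Fin (n i)) (r : R i) :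
    sglr i j r i j = r := by
  simp [sglr_apply_same]

lemma sglr_apply_ne (i : Fin m) (j : Fin (n i)) (r : R i) {i' : Fin m} (h : i' ≠ i)
    (j' : Fin (n i')) : sglr i j r i' j' = 0 := by
  simp [sglr, Pi.single_eq_of_ne h]

lemma sglr_zero (i : Fin m) (j : Fin (n i)) : sglr i j (0 : R i) = 0 := by
  simp [sglr]

lemma sglr_add (i : Fin m) (j : Fin (n i)) (r s : R i) :
    sglr i j (r + s) = sglr i j r + sglr i j s := by
  simp [sglr, Pi.single_add]

lemma sglr_mul_sglr (i : Fin m) (j : Fin (n i)) (r s : R i) :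
    sglr i j r * sglr i j s = sglr i j (r * s) := by
  funext i' j'
  rcases eq_or_ne i' i with rfl | hi
  · rcases eq_or_ne j' j with rfl | hj
    · simp [mul_apply2, sglr_apply_self]
    · simp [mul_apply2, sglr_apply_same, hj]
  · simp [mul_apply2, sglr_apply_ne _ _ _ hi]

lemma sgl_mul_of_one {u : ∀ i, Fin (n i) → R i} {i₀ : Fin m} {j₀ : Fin (n i₀)}
    (h : u i₀ j₀ = 1) : sglr i₀ j₀ 1 * u = sglr i₀ j₀ 1 := by
  funext i' j'
  rcases eq_or_ne i' i₀ with rfl | hi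
  · rcases eq_or_ne j' j₀ with rfl | hj
    · simp [mul_apply2, sglr_apply_self, h]
    · simp [mul_apply2, sglr_apply_same, hj]
  · simp [mul_apply2, sglr_apply_ne _ _ _ hi]

lemma conj_sgl (i : Fin m) (j : Fin (n i)) (x : ∀ i, Fin (n i) → R i) :
    sglr i j 1 * x * sglr i j 1 = sglr i j (x i j) := by
  funext i' j'
  rcases eq_or_ne i' i with rfl | hi
  · rcases eq_or_ne j' j with rfl | hj
    · simp [mul_apply2, sglr_apply_self]
    · simp [mul_apply2, sglr_apply_same, hj]
  · simp [mul_apply2, sglr_apply_ne _ _ _ hi]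

variable [∀ i, Nontrivial (R i)]

/-- An automorphism maps a "coordinate unit" idempotent to another coordinate unit. -/
lemma exists_sgl (hR : ∀ i, ∀ e : R i, IsIdempotentElem e → e = 0 ∨ e = 1)
    (F : RingAut (∀ i, Fin (n i) → R i)) (i : Fin m) (j : Fin (n i)) :
    ∃ i' j', F (sglr i j 1) = sglr i' j' 1 := by
  set u := F (sglr i j 1) with hu
  have hsgl_idem : sglr i j (1 : R i) * sglr i j 1 = sglr i j 1 := by
    rw [sglr_mul_sglr, one_mul]
  have hu_idem : u * u = u := by rw [hu, ← map_mul, hsgl_idem]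
  have hcoord : ∀ i' j', u i' j' = 0 ∨ u i' j' = 1 := fun i' j' =>
    hR i' _ (congrFun (congrFun hu_idem i') j')
  have hune : u ≠ 0 := by
    intro h
    have h2 : sglr i j (1 : R i) = 0 := F.injective (by rw [← hu, h, map_zero])
    have h3 := congrFun (congrFun h2 i) j
    rw [sglr_apply_self] at h3
    simp at h3
  obtain ⟨i₁, j₁, h1⟩ : ∃ i₁ j₁, u i₁ j₁ = 1 := by
    by_contra hc
    push_neg at hc
    apply hune
    funext i' j'
    rcases hcoord i' j' with h | h
    · exact h
    · exact absurd h (hc i' j')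
  refine ⟨i₁, j₁, ?_⟩
  have hv : sglr i₁ j₁ 1 * u = sglr i₁ j₁ 1 := sgl_mul_of_one h1
  set f := F.symm (sglr i₁ j₁ 1) with hf
  have hFf : F f = sglr i₁ j₁ 1 := F.apply_symm_apply _
  have hfe : f * sglr i j 1 = f := by
    apply F.injective
    rw [map_mul, hFf, ← hu, hv]
  have hf_idem : f * f = f := by
    apply F.injective
    rw [map_mul, hFf, sglr_mul_sglr, one_mul]
  have hfc : ∀ i' j', f i' j' = 0 ∨ f i' j' = 1 := fun i' j' =>
    hR i' _ (congrFun (congrFun hf_idem i') j')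
  have hsupp : f = sglr i j (f i j) := by
    funext i' j'
    have hco := congrFun (congrFun hfe i') j'
    rcases eq_or_ne i' i with rfl | hi
    · rcases eq_or_ne j' j with rfl | hj
      · rw [sglr_apply_self]
      · rw [sglr_apply_same, if_neg hj]
        rw [mul_apply2, sglr_apply_same, if_neg hj, mul_zero] at hco
        exact hco.symm
    · rw [sglr_apply_ne _ _ _ hi]
      rw [mul_apply2, sglr_apply_ne _ _ _ hi, mul_zero] at hco
      exact hco.symm
  have hfij : f i j = 1 := by
    rcases hfc i j with h0 | h1'
    · exfalso
      rw [h0, sglr_zero] at hsupp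
      have h4 : sglr i₁ j₁ (1 : R i₁) = 0 := by rw [← hFf, hsupp, map_zero]
      have h5 := congrFun (congrFun h4 i₁) j₁
      rw [sglr_apply_self] at h5
      simp at h5
    · exact h1'
  have h6 : sglr i j (1 : R i) = f := by rw [hsupp, hfij]
  rw [hu, h6, hFf]

/-- The index `i` is preserved, since the corner ring at `(i,j)` is `R i`. -/
lemma exists_sgl_same (hR : ∀ i, ∀ e : R i, IsIdempotentElem e → e = 0 ∨ e = 1)
    (hiso : ∀ i i', Nonempty (R i ≃+* R i') → i = i')
    (F : RingAut (∀ i, Fin (n i) → R i)) (i : Fin m) (j : Fin (n i)) :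
    ∃ j', F (sglr i j 1) = sglr i j' 1 := by
  obtain ⟨i', j', h⟩ := exists_sgl hR F i j
  suffices hii : i = i' by subst hii; exact ⟨j', h⟩
  apply hiso
  have hsupp : ∀ r : R i, F (sglr i j r) = sglr i' j' (F (sglr i j r) i' j') := by
    intro r
    have h1 : sglr i j (1 : R i) * sglr i j r * sglr i j 1 = sglr i j r := by
      rw [sglr_mul_sglr, sglr_mul_sglr, one_mul, mul_one]
    conv_lhs => rw [← h1]
    rw [map_mul, map_mul, h, conj_sgl]
  have hsymm : F.symm (sglr i' j' 1) = sglr i j 1 := by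
    rw [← h, F.symm_apply_apply]
  have hsupp' : ∀ s : R i', F.symm (sglr i' j' s) = sglr i j (F.symm (sglr i' j' s) i j) := by
    intro s
    have h1 : sglr i' j' (1 : R i') * sglr i' j' s * sglr i' j' 1 = sglr i' j' s := by
      rw [sglr_mul_sglr, sglr_mul_sglr, one_mul, mul_one]
    conv_lhs => rw [← h1]
    rw [map_mul, map_mul, hsymm, conj_sgl]
  refine ⟨{ toFun := fun r => F (sglr i j r) i' j'
            invFun := fun s => F.symm (sglr i' j' s) i j
            left_inv := ?_
            right_inv := ?_
            map_mul' := ?_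
            map_add' := ?_ }⟩
  · intro r
    dsimp only
    rw [← hsupp r, F.symm_apply_apply, sglr_apply_self]
  · intro s
    dsimp only
    rw [← hsupp' s, F.apply_symm_apply, sglr_apply_self]
  · intro a b
    show F (sglr i j (a * b)) i' j' = F (sglr i j a) i' j' * F (sglr i j b) i' j'
    rw [← sglr_mul_sglr, map_mul]
    rfl
  · intro a b
    show F (sglr i j (a + b)) i' j' = F (sglr i j a) i' j' + F (sglr i j b) i' j'
    rw [sglr_add, map_add]
    rfl

/-- The block idempotent `E i` is fixed by every automorphism. -/
lemma F_E (hR : ∀ i, ∀ e : R i, IsIdempotentElem e → e = 0 ∨ e = 1)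
    (hiso : ∀ i i', Nonempty (R i ≃+* R i') → i = i')
    (F : RingAut (∀ i, Fin (n i) → R i)) (i : Fin m) :
    F (Pi.single i (1 : Fin (n i) → R i)) = Pi.single i 1 := by
  have hE_idem : (Pi.single i (1 : Fin (n i) → R i) : ∀ i, Fin (n i) → R i) *
      Pi.single i 1 = Pi.single i 1 := by
    funext i' j'
    rcases eq_or_ne i' i with rfl | hi
    · simp [mul_apply2, Pi.single_eq_same]
    · simp [mul_apply2, Pi.single_eq_of_ne hi]
  have hFE_idem : F (Pi.single i 1) * F (Pi.single i 1) = F (Pi.single i 1) := by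
    rw [← map_mul, hE_idem]
  have hcoord : ∀ i' j', F (Pi.single i (1 : Fin (n i) → R i)) i' j' = 0 ∨
      F (Pi.single i (1 : Fin (n i) → R i)) i' j' = 1 := fun i' j' =>
    hR i' _ (congrFun (congrFun hFE_idem i') j')
  funext i₀ j₀
  rcases eq_or_ne i₀ i with rfl | hi
  · obtain ⟨j₁, hj₁⟩ := exists_sgl_same hR hiso (F.symm : RingAut _) i₀ j₀
    have h2 : sglr i₀ j₁ 1 * (Pi.single i₀ (1 : Fin (n i₀) → R i₀) : ∀ i, Fin (n i) → R i) =
        sglr i₀ j₁ 1 := sgl_mul_of_one (by simp [Pi.single_eq_same])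
    have h3 := congrArg F h2
    rw [map_mul, ← hj₁, F.apply_symm_apply] at h3
    have h4 := congrFun (congrFun h3 i₀) j₀
    rw [mul_apply2, sglr_apply_self, one_mul] at h4
    rw [h4]
    simp [Pi.single_eq_same]
  · rcases hcoord i₀ j₀ with h0 | h1
    · rw [h0, Pi.single_eq_of_ne hi]
      rfl
    · exfalso
      obtain ⟨j₁, hj₁⟩ := exists_sgl_same hR hiso (F.symm : RingAut _) i₀ j₀
      have h2 : sglr i₀ j₀ 1 * F (Pi.single i (1 : Fin (n i) → R i)) = sglr i₀ j₀ 1 :=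
        sgl_mul_of_one h1
      have h3 := congrArg F.symm h2
      rw [map_mul, F.symm_apply_apply, hj₁] at h3
      have h4 := congrFun (congrFun h3 i₀) j₁
      rw [mul_apply2, sglr_apply_self, Pi.single_eq_of_ne hi] at h4
      simp at h4

omit [∀ i, Nontrivial (R i)] in
lemma E_mul (i : Fin m) (x : ∀ i, Fin (n i) → R i) :
    (Pi.single i (1 : Fin (n i) → R i) : ∀ i, Fin (n i) → R i) * x = Pi.single i (x i) := by
  funext i' j'
  rcases eq_or_ne i' i with rfl | hi
  · simp [mul_apply2, Pi.single_eq_same]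
  · simp [mul_apply2, Pi.single_eq_of_ne hi]

lemma F_single' (hR : ∀ i, ∀ e : R i, IsIdempotentElem e → e = 0 ∨ e = 1)
    (hiso : ∀ i i', Nonempty (R i ≃+* R i') → i = i')
    (F : RingAut (∀ i, Fin (n i) → R i)) (i : Fin m) (x : ∀ i, Fin (n i) → R i) :
    F (Pi.single i (x i)) = Pi.single i (F x i) := by
  rw [← E_mul i x, map_mul, F_E hR hiso, E_mul]

lemma F_single (hR : ∀ i, ∀ e : R i, IsIdempotentElem e → e = 0 ∨ e = 1)
    (hiso : ∀ i i', Nonempty (R i ≃+* R i') → i = i')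
    (F : RingAut (∀ i, Fin (n i) → R i)) (i : Fin m) (y : Fin (n i) → R i) :
    F (Pi.single i y) = Pi.single i (F (Pi.single i y) i) := by
  have := F_single' hR hiso F i (Pi.single i y)
  rwa [Pi.single_eq_same] at this

omit [∀ i, Nontrivial (R i)] in
lemma single_mul_single (i : Fin m) (y y' : Fin (n i) → R i) :
    (Pi.single i y : ∀ i, Fin (n i) → R i) * Pi.single i y' = Pi.single i (y * y') := by
  funext i' j'
  rcases eq_or_ne i' i with rfl | hi
  · simp [mul_apply2, Pi.single_eq_same]
  · simp [mul_apply2, Pi.single_eq_of_ne hi]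

/-- The restriction of `F` to the `i`-th block. -/
def blockAut (hR : ∀ i, ∀ e : R i, IsIdempotentElem e → e = 0 ∨ e = 1)
    (hiso : ∀ i i', Nonempty (R i ≃+* R i') → i = i')
    (F : RingAut (∀ i, Fin (n i) → R i)) (i : Fin m) : RingAut (Fin (n i) → R i) where
  toFun y := F (Pi.single i y) i
  invFun y := F.symm (Pi.single i y) i
  left_inv y := by
    dsimp only
    rw [← F_single hR hiso F i y, F.symm_apply_apply, Pi.single_eq_same]
  right_inv y := by
    dsimp only
    rw [← F_single hR hiso (F.symm : RingAut _) i y, F.apply_symm_apply, Pi.single_eq_same]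
  map_mul' y y' := by
    show F (Pi.single i (y * y')) i = F (Pi.single i y) i * F (Pi.single i y') i
    rw [← single_mul_single, map_mul]
    rfl
  map_add' y y' := by
    show F (Pi.single i (y + y')) i = F (Pi.single i y) i + F (Pi.single i y') i
    rw [Pi.single_add, map_add]
    rfl

lemma blockAut_eq (hR : ∀ i, ∀ e : R i, IsIdempotentElem e → e = 0 ∨ e = 1)
    (hiso : ∀ i i', Nonempty (R i ≃+* R i') → i = i')
    (F : RingAut (∀ i, Fin (n i) → R i)) (x : ∀ i, Fin (n i) → R i) (i : Fin m) :
    blockAut hR hiso F i (x i) = F x i := by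
  show F (Pi.single i (x i)) i = F x i
  rw [F_single' hR hiso F i x, Pi.single_eq_same]

end Stmt8Aux

open Stmt8Aux in
/-- For pairwise non-isomorphic rings `R i`, each with exactly two
idempotents, every ring automorphism `F` of `A = ∏ i, (R i)^(n i)` stabilizes each
factor `(R i)^(n i)`, and `F ↦ (restrictions of F)` is a group isomorphism
`Aut(A) ≅ ∏ i, Aut((R i)^(n i))`. -/
theorem stmt8 {m : ℕ} (n : Fin m → ℕ) (R : Fin m → Type*) [∀ i, Ring (R i)]
    [∀ i, Nontrivial (R i)]
    (hR : ∀ i, ∀ e : R i, IsIdempotentElem e → e = 0 ∨ e = 1)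
    (hiso : ∀ i i', Nonempty (R i ≃+* R i') → i = i') :
    ∃ Ψ : RingAut (∀ i, Fin (n i) → R i) ≃* ∀ i, RingAut (Fin (n i) → R i),
      ∀ (F : RingAut (∀ i, Fin (n i) → R i)) (x : ∀ i, Fin (n i) → R i) (i : Fin m),
        Ψ F i (x i) = F x i := by
  refine ⟨{ toFun := fun F i => blockAut hR hiso F i
            invFun := fun g => RingEquiv.piCongrRight g
            left_inv := ?_
            right_inv := ?_
            map_mul' := ?_ }, ?_⟩
  · intro F
    apply RingEquiv.ext
    intro x
    funext i
    exact blockAut_eq hR hiso F x i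
  · intro g
    funext i
    apply RingEquiv.ext
    intro y
    show (RingEquiv.piCongrRight g) (Pi.single i y) i = g i y
    rw [RingEquiv.piCongrRight_apply, Pi.single_eq_same]
  · intro F G
    funext i
    apply RingEquiv.ext
    intro y
    show (F * G) (Pi.single i y) i = blockAut hR hiso F i (blockAut hR hiso G i y)
    show F (G (Pi.single i y)) i = blockAut hR hiso F i (blockAut hR hiso G i y)
    rw [F_single hR hiso G i y]
    rfl
  · intro F x i
    exact blockAut_eq hR hiso F x i
end

section
/- Let R_1, ..., R_m be pairwise non-isomorphic rings with exactly two idempotents each. Then the ring automorphism group of R_1^{n_1} × ... × R_m^{n_m} is isomorphic to the direct product of wreath products (Aut(R_1) ≀ S_{n_1}) × ... × (Aut(R_m) ≀ S_{n_m}). -/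
set_option linter.unusedSectionVars false

/-- The action of the symmetric group on `G^n` permuting the coordinates. -/
def permMulAut (G : Type*) [Group G] (n : ℕ) :
    Equiv.Perm (Fin n) →* MulAut (Fin n → G) where
  toFun σ :=
    { toFun := fun f i => f (σ⁻¹ i)
      invFun := fun f i => f (σ i)
      left_inv := fun f => by funext i; simp
      right_inv := fun f => by funext i; simp
      map_mul' := fun f g => rfl }
  map_one' := by ext f i; simp
  map_mul' σ τ := by ext f i; simp

/-- The wreath product `G ≀ Sₙ = G^n ⋊ Sₙ`. -/
abbrev Wreath (G : Type*) [Group G] (n : ℕ) :=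
  SemidirectProduct (Fin n → G) (Equiv.Perm (Fin n)) (permMulAut G n)

namespace Stmt9Aux

section NoRing
variable {m : ℕ} {n : Fin m → ℕ}

lemma sigma_mk_inj {i : Fin m} {j j' : Fin (n i)}
    (h : (⟨i, j⟩ : Σ i, Fin (n i)) = ⟨i, j'⟩) : j = j' := by
  simpa using h

lemma sigma_eq (p : Σ i, Fin (n i)) (i : Fin m) (h : p.1 = i) :
    p = ⟨i, Fin.cast (congrArg n h) p.2⟩ := by
  obtain ⟨a, b⟩ := p
  dsimp at h
  subst h
  rfl

end NoRing

variable {m : ℕ} {n : Fin m → ℕ} {R : Fin m → Type*} [∀ i, Ring (R i)]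

/-- Insertion of `R p.1` in the `p` coordinate of `∀ i, Fin (n i) → R i`. -/
def ιS (p : Σ i, Fin (n i)) (x : R p.1) : ∀ i, Fin (n i) → R i :=
  Pi.single p.1 (Pi.single p.2 x)

lemma S_ext {x y : ∀ i, Fin (n i) → R i}
    (h : ∀ r : Σ i, Fin (n i), x r.1 r.2 = y r.1 r.2) : x = y :=
  funext fun i => funext fun j => h ⟨i, j⟩

lemma mulS_apply (x y : ∀ i, Fin (n i) → R i) (r : Σ i, Fin (n i)) :
    (x * y) r.1 r.2 = x r.1 r.2 * y r.1 r.2 := rfl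

lemma ιS_apply_self (p : Σ i, Fin (n i)) (x : R p.1) : ιS p x p.1 p.2 = x := by
  obtain ⟨i, j⟩ := p
  simp [ιS]

lemma ιS_apply_ne (p : Σ i, Fin (n i)) (x : R p.1) (q : Σ i, Fin (n i)) (h : q ≠ p) :
    ιS p x q.1 q.2 = 0 := by
  obtain ⟨i, j⟩ := p
  obtain ⟨i', j'⟩ := q
  by_cases hi : i' = i
  · subst hi
    have hj : j' ≠ j := fun hj => h (by rw [hj])
    simp [ιS, Pi.single_eq_of_ne hj]
  · simp [ιS, Pi.single_eq_of_ne hi]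

lemma ιS_mk_self (i : Fin m) (j : Fin (n i)) (x : R i) :
    ιS (⟨i, j⟩ : Σ i, Fin (n i)) x i j = x :=
  ιS_apply_self ⟨i, j⟩ x

lemma ιS_mk_ne (i : Fin m) (j j' : Fin (n i)) (h : j' ≠ j) (x : R i) :
    ιS (⟨i, j⟩ : Σ i, Fin (n i)) x i j' = 0 :=
  ιS_apply_ne ⟨i, j⟩ x ⟨i, j'⟩ (fun hh => h (sigma_mk_inj hh))

lemma ιS_mul (p : Σ i, Fin (n i)) (x y : R p.1) : ιS p x * ιS p y = ιS p (x * y) := by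
  obtain ⟨i, j⟩ := p
  simp [ιS, Pi.single_mul]

lemma ιS_add (p : Σ i, Fin (n i)) (x y : R p.1) : ιS p x + ιS p y = ιS p (x + y) := by
  obtain ⟨i, j⟩ := p
  simp [ιS, Pi.single_add]

variable [∀ i, Nontrivial (R i)]

lemma E_ne_zero (p : Σ i, Fin (n i)) : ιS p (1 : R p.1) ≠ 0 := by
  intro h
  have := congrArg (fun z => z p.1 p.2) h
  simp only [ιS_apply_self] at this
  exact one_ne_zero this

lemma E_injective {p q : Σ i, Fin (n i)} (h : ιS p (1 : R p.1) = ιS q (1 : R q.1)) :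
    p = q := by
  by_contra hne
  have h2 := congrArg (fun z => z p.1 p.2) h
  rw [ιS_apply_self p 1] at h2
  rw [ιS_apply_ne q 1 p hne] at h2
  exact one_ne_zero h2

/-- Decomposition of an element of the product as a sum of coordinate insertions. -/
lemma sum_ιS (x : ∀ i, Fin (n i) → R i) :
    ∑ p : Σ i, Fin (n i), ιS p (x p.1 p.2) = x := by
  apply S_ext
  intro r
  have h1 : (∑ p : Σ i, Fin (n i), ιS p (x p.1 p.2)) r.1 r.2
      = ∑ p : Σ i, Fin (n i), ιS p (x p.1 p.2) r.1 r.2 := by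
    rw [Finset.sum_apply, Finset.sum_apply]
  rw [h1, Finset.sum_eq_single r (fun p _ hp => ιS_apply_ne p _ r (Ne.symm hp))
    (fun h => absurd (Finset.mem_univ r) h), ιS_apply_self]

section Psi

variable (φ : RingAut (∀ i, Fin (n i) → R i)) (p q : Σ i, Fin (n i))

/-- The image `φ (ιS p x)` is supported at `q` whenever `φ` maps the idempotent at `p`
to the idempotent at `q`. -/
lemma support_image (hq : φ (ιS p (1 : R p.1)) = ιS q (1 : R q.1)) (x : R p.1)
    (r : Σ i, Fin (n i)) (hr : r ≠ q) : φ (ιS p x) r.1 r.2 = 0 := by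
  have h2 : φ (ιS p x) = φ (ιS p x) * ιS q 1 := by
    rw [← hq, ← map_mul, ιS_mul, mul_one]
  rw [h2, mulS_apply, ιS_apply_ne q 1 r hr, mul_zero]

lemma collapse (hq : φ (ιS p (1 : R p.1)) = ιS q (1 : R q.1)) (x : R p.1) :
    ιS q (φ (ιS p x) q.1 q.2) = φ (ιS p x) := by
  apply S_ext
  intro r
  by_cases hr : r = q
  · subst hr; rw [ιS_apply_self]
  · rw [ιS_apply_ne _ _ r hr, support_image φ p q hq x r hr]

/-- The ring isomorphism `R p.1 ≃+* R q.1` induced by `φ`. -/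
def Psi (hq : φ (ιS p (1 : R p.1)) = ιS q (1 : R q.1)) : R p.1 ≃+* R q.1 where
  toFun x := φ (ιS p x) q.1 q.2
  invFun y := φ.symm (ιS q y) p.1 p.2
  left_inv x := by
    show φ.symm (ιS q (φ (ιS p x) q.1 q.2)) p.1 p.2 = x
    rw [collapse φ p q hq, RingEquiv.symm_apply_apply, ιS_apply_self]
  right_inv y := by
    have hq' : (φ.symm : RingAut (∀ i, Fin (n i) → R i)) (ιS q (1 : R q.1))
        = ιS p (1 : R p.1) := by
      rw [← hq, RingEquiv.symm_apply_apply]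
    show φ (ιS p (φ.symm (ιS q y) p.1 p.2)) q.1 q.2 = y
    rw [collapse (φ.symm : RingAut (∀ i, Fin (n i) → R i)) q p hq',
      RingEquiv.apply_symm_apply, ιS_apply_self]
  map_mul' x y := by
    show φ (ιS p (x * y)) q.1 q.2 = φ (ιS p x) q.1 q.2 * φ (ιS p y) q.1 q.2
    rw [← ιS_mul, map_mul]; rfl
  map_add' x y := by
    show φ (ιS p (x + y)) q.1 q.2 = φ (ιS p x) q.1 q.2 + φ (ιS p y) q.1 q.2
    rw [← ιS_add, map_add]; rfl

lemma Psi_apply (hq : φ (ιS p (1 : R p.1)) = ιS q (1 : R q.1)) (x : R p.1) :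
    Psi φ p q hq x = φ (ιS p x) q.1 q.2 := rfl

end Psi

/-- The underlying ring automorphism of the image of a wreath element. -/
def PhiFun (w : ∀ i, Wreath (RingAut (R i)) (n i)) :
    (∀ i, Fin (n i) → R i) ≃+* (∀ i, Fin (n i) → R i) where
  toFun x i j := (w i).left j (x i ((w i).right⁻¹ j))
  invFun x i j := ((w i).left ((w i).right j)).symm (x i ((w i).right j))
  left_inv x := by funext i j; simp
  right_inv x := by funext i j; simp
  map_mul' x y := by funext i j; simp [Pi.mul_apply]
  map_add' x y := by funext i j; simp [Pi.add_apply]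

lemma PhiFun_apply (w : ∀ i, Wreath (RingAut (R i)) (n i)) (x : ∀ i, Fin (n i) → R i)
    (i : Fin m) (j : Fin (n i)) :
    PhiFun w x i j = (w i).left j (x i ((w i).right⁻¹ j)) := rfl

/-- The forward homomorphism from the product of wreath products into the
automorphism group. -/
def Phi : (∀ i, Wreath (RingAut (R i)) (n i)) →* RingAut (∀ i, Fin (n i) → R i) where
  toFun := PhiFun
  map_one' := by
    apply RingEquiv.ext
    intro x
    funext i j
    rw [PhiFun_apply]
    simp only [Pi.one_apply, SemidirectProduct.one_left, SemidirectProduct.one_right, inv_one,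
      Equiv.Perm.coe_one, id_eq]
    rfl
  map_mul' w w' := by
    apply RingEquiv.ext
    intro x
    funext i j
    show PhiFun (w * w') x i j = PhiFun w (PhiFun w' x) i j
    rw [PhiFun_apply, PhiFun_apply, PhiFun_apply]
    simp only [Pi.mul_apply, SemidirectProduct.mul_left, SemidirectProduct.mul_right,
      mul_inv_rev, permMulAut]
    rfl

lemma Phi_apply (w : ∀ i, Wreath (RingAut (R i)) (n i)) (x : ∀ i, Fin (n i) → R i)
    (i : Fin m) (j : Fin (n i)) :
    Phi w x i j = (w i).left j (x i ((w i).right⁻¹ j)) := rfl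

end Stmt9Aux

open Stmt9Aux in
/-- For pairwise non-isomorphic rings `R i`, each with exactly two
idempotents, the ring automorphism group of `∏ i, (R i)^(n i)` is isomorphic to the
direct product of the wreath products `Aut(R i) ≀ S_{n i}`. -/
theorem stmt9 {m : ℕ} (n : Fin m → ℕ) (R : Fin m → Type*) [∀ i, Ring (R i)]
    [∀ i, Nontrivial (R i)]
    (hR : ∀ i, ∀ e : R i, IsIdempotentElem e → e = 0 ∨ e = 1)
    (hiso : ∀ i i', Nonempty (R i ≃+* R i') → i = i') :
    Nonempty
      (RingAut (∀ i, Fin (n i) → R i) ≃* ∀ i, Wreath (RingAut (R i)) (n i)) := by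
  -- injectivity of Phi
  have hinj : Function.Injective (Phi (n := n) (R := R)) := by
    rw [injective_iff_map_eq_one]
    intro w hw
    have hw' : ∀ (x : ∀ i, Fin (n i) → R i) i j,
        (w i).left j (x i ((w i).right⁻¹ j)) = x i j := by
      intro x i j
      have h1 : Phi w x = x := by rw [hw]; rfl
      exact congrFun (congrFun h1 i) j
    have hr : ∀ i (j : Fin (n i)), (w i).right⁻¹ j = j := by
      intro i j
      by_contra hj
      have h2 := hw' (ιS ⟨i, (w i).right⁻¹ j⟩ 1) i j
      rw [ιS_mk_self, map_one, ιS_mk_ne i ((w i).right⁻¹ j) j (fun hh => hj hh.symm)] at h2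
      exact one_ne_zero h2
    have hl : ∀ i j (a : R i), (w i).left j a = a := by
      intro i j a
      have h2 := hw' (ιS ⟨i, j⟩ a) i j
      rw [hr i j, ιS_mk_self] at h2
      exact h2
    funext i
    have h3 : (w i).right = 1 := inv_eq_one.mp (Equiv.ext (hr i))
    have h4 : (w i).left = 1 := funext fun j => RingEquiv.ext (hl i j)
    exact SemidirectProduct.ext h4 h3
  -- surjectivity of Phi
  have hsurj : Function.Surjective (Phi (n := n) (R := R)) := by
    intro φ
    -- idempotents have 0/1 components
    have comp01 : ∀ (e : ∀ i, Fin (n i) → R i), e * e = e →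
        ∀ r : Σ i, Fin (n i), e r.1 r.2 = 0 ∨ e r.1 r.2 = 1 := by
      intro e he r
      exact hR r.1 _ (congrFun (congrFun he r.1) r.2)
    -- a 0/1 idempotent absorbed by the idempotent at `p` equals 0 or that idempotent
    have mask : ∀ (a : ∀ i, Fin (n i) → R i) (p : Σ i, Fin (n i)),
        (∀ r : Σ i, Fin (n i), a r.1 r.2 = 0 ∨ a r.1 r.2 = 1) →
        a * ιS p 1 = a → a = 0 ∨ a = ιS p (1 : R p.1) := by
      intro a p h01 habs
      have hz : ∀ r : Σ i, Fin (n i), r ≠ p → a r.1 r.2 = 0 := by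
        intro r hr
        have h5 := congrFun (congrFun habs r.1) r.2
        rw [mulS_apply a (ιS p 1) r, ιS_apply_ne p 1 r hr, mul_zero] at h5
        exact h5.symm
      rcases h01 p with h | h
      · left
        apply S_ext
        intro r
        by_cases hr : r = p
        · subst hr; exact h
        · exact hz r hr
      · right
        apply S_ext
        intro r
        by_cases hr : r = p
        · subst hr; rw [h, ιS_apply_self]
        · rw [hz r hr, ιS_apply_ne p 1 r hr]
    -- any automorphism maps coordinate idempotents to coordinate idempotents
    have hex : ∀ (ψ : RingAut (∀ i, Fin (n i) → R i)) (p : Σ i, Fin (n i)),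
        ∃ q, ψ (ιS p (1 : R p.1)) = ιS q (1 : R q.1) := by
      intro ψ p
      set f := ψ (ιS p (1 : R p.1)) with hf
      have hidem : f * f = f := by
        rw [hf, ← map_mul, ιS_mul, mul_one]
      have h01 := comp01 f hidem
      have hne : f ≠ 0 := by
        intro h0
        exact E_ne_zero p (ψ.injective (by rw [← hf, h0, map_zero]))
      have hex1 : ∃ r : Σ i, Fin (n i), f r.1 r.2 = 1 := by
        by_contra hc
        push_neg at hc
        apply hne
        apply S_ext
        intro r
        rcases h01 r with h | h
        · exact h
        · exact absurd h (hc r)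
      obtain ⟨r0, hr0⟩ := hex1
      have huniq : ∀ r1 r2 : Σ i, Fin (n i),
          f r1.1 r1.2 = 1 → f r2.1 r2.2 = 1 → r1 = r2 := by
        intro r1 r2 h1 h2
        by_contra hne12
        have key : ∀ r : Σ i, Fin (n i), f r.1 r.2 = 1 →
            ψ.symm (ιS r (1 : R r.1)) = ιS p 1 := by
          intro r hr
          have hEf : ιS r (1 : R r.1) * f = ιS r 1 := by
            apply S_ext
            intro s
            rw [mulS_apply]
            by_cases hs : s = r
            · subst hs; rw [ιS_apply_self, hr, mul_one]
            · rw [ιS_apply_ne r 1 s hs, zero_mul]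
          have haidem : ψ.symm (ιS r (1 : R r.1)) * ψ.symm (ιS r (1 : R r.1))
              = ψ.symm (ιS r (1 : R r.1)) := by
            rw [← map_mul, ιS_mul, mul_one]
          have habs : ψ.symm (ιS r (1 : R r.1)) * ιS p 1 = ψ.symm (ιS r (1 : R r.1)) := by
            apply ψ.injective
            rw [map_mul, RingEquiv.apply_symm_apply, ← hf, hEf]
          rcases mask _ p (comp01 _ haidem) habs with h | h
          · exfalso
            refine E_ne_zero (R := R) r ?_
            have h6 := congrArg ψ h
            rwa [RingEquiv.apply_symm_apply, map_zero] at h6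
          · exact h
        exact hne12 (E_injective (ψ.symm.injective ((key r1 h1).trans (key r2 h2).symm)))
      refine ⟨r0, ?_⟩
      apply S_ext
      intro r
      by_cases hr : r = r0
      · subst hr; rw [hr0, ιS_apply_self]
      · rw [ιS_apply_ne r0 1 r hr]
        rcases h01 r with h | h
        · exact h
        · exact absurd (huniq r r0 h hr0) hr
    choose σ hσ using hex
    have hστ : ∀ p, σ φ.symm (σ φ p) = p := by
      intro p
      apply E_injective (R := R)
      rw [← hσ φ.symm (σ φ p), ← hσ φ p, RingEquiv.symm_apply_apply]
    have hτσ : ∀ p, σ φ (σ φ.symm p) = p := by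
      intro p
      apply E_injective (R := R)
      rw [← hσ φ (σ φ.symm p), ← hσ φ.symm p, RingEquiv.apply_symm_apply]
    have hfst : ∀ p, (σ φ p).1 = p.1 :=
      fun p => (hiso p.1 _ ⟨Psi φ p (σ φ p) (hσ φ p)⟩).symm
    have hfst' : ∀ p, (σ φ.symm p).1 = p.1 :=
      fun p => (hiso p.1 _ ⟨Psi φ.symm p (σ φ.symm p) (hσ φ.symm p)⟩).symm
    let τf : ∀ i, Fin (n i) → Fin (n i) :=
      fun i j => Fin.cast (congrArg n (hfst ⟨i, j⟩)) (σ φ ⟨i, j⟩).2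
    let τ'f : ∀ i, Fin (n i) → Fin (n i) :=
      fun i j => Fin.cast (congrArg n (hfst' ⟨i, j⟩)) (σ φ.symm ⟨i, j⟩).2
    have hτf : ∀ i j, σ φ ⟨i, j⟩ = ⟨i, τf i j⟩ :=
      fun i j => sigma_eq (σ φ ⟨i, j⟩) i (hfst ⟨i, j⟩)
    have hτ'f : ∀ i j, σ φ.symm ⟨i, j⟩ = ⟨i, τ'f i j⟩ :=
      fun i j => sigma_eq (σ φ.symm ⟨i, j⟩) i (hfst' ⟨i, j⟩)
    have li : ∀ i j, τ'f i (τf i j) = j := by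
      intro i j
      apply sigma_mk_inj (i := i)
      rw [← hτ'f i (τf i j), ← hτf i j, hστ ⟨i, j⟩]
    have ri : ∀ i j, τf i (τ'f i j) = j := by
      intro i j
      apply sigma_mk_inj (i := i)
      rw [← hτf i (τ'f i j), ← hτ'f i j, hτσ ⟨i, j⟩]
    let τ : ∀ i, Equiv.Perm (Fin (n i)) := fun i => ⟨τf i, τ'f i, li i, ri i⟩
    have hq : ∀ i (j : Fin (n i)),
        φ (ιS ⟨i, τ'f i j⟩ (1 : R i)) = ιS (⟨i, j⟩ : Σ i, Fin (n i)) (1 : R i) := by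
      intro i j
      rw [hσ φ ⟨i, τ'f i j⟩, hτf i (τ'f i j), ri i j]
    refine ⟨fun i => ⟨fun j => Psi φ ⟨i, τ'f i j⟩ ⟨i, j⟩ (hq i j), τ i⟩, ?_⟩
    apply RingEquiv.ext
    intro x
    funext i j
    have key : φ x i j = φ (ιS ⟨i, τ'f i j⟩ (x i (τ'f i j))) i j := by
      conv_lhs => rw [← sum_ιS x, map_sum]
      have h7 : (∑ p : Σ i, Fin (n i), φ (ιS p (x p.1 p.2))) i j
          = ∑ p : Σ i, Fin (n i), φ (ιS p (x p.1 p.2)) i j := by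
        rw [Finset.sum_apply, Finset.sum_apply]
      rw [h7, Finset.sum_eq_single (⟨i, τ'f i j⟩ : Σ i, Fin (n i))]
      · intro p _ hp
        refine support_image φ p (σ φ p) (hσ φ p) _ ⟨i, j⟩ ?_
        intro hc
        exact hp (by rw [← hστ p, ← hc, hτ'f])
      · exact fun h => absurd (Finset.mem_univ _) h
    exact (key).symm
  exact ⟨(MulEquiv.ofBijective (Phi (n := n) (R := R)) ⟨hinj, hsurj⟩).symm⟩
end

section
/- Let K be a perfect field, P ∈ K[X] an irreducible polynomial, and n ≥ 0. Then the K-algebra K[X]/(P^n) is isomorphic to (K[X]/(P))[Y]/(Y^n). -/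
open Polynomial

theorem aux10 {K : Type*} [Field K] [PerfectField K]
    (P : K[X]) (hP : Irreducible P) (n : ℕ) (hn : 0 < n) :
    Nonempty (AdjoinRoot (P ^ n) ≃ₐ[K]
      ((AdjoinRoot P)[X] ⧸ Ideal.span {(X : (AdjoinRoot P)[X]) ^ n})) := by
  haveI := Fact.mk hP
  have hP0 : P ≠ 0 := hP.ne_zero
  have hPn : P ^ n ≠ 0 := pow_ne_zero n hP0
  haveI : Module.Finite K (AdjoinRoot P) := (AdjoinRoot.powerBasis hP0).finite
  haveI : Algebra.IsAlgebraic K (AdjoinRoot P) := Algebra.IsAlgebraic.of_finite K _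
  haveI : Algebra.FormallyEtale K (AdjoinRoot P) :=
    Algebra.FormallyEtale.of_isSeparable K (AdjoinRoot P)
  have hle : Ideal.span {P ^ n} ≤ Ideal.span {P} :=
    Ideal.span_singleton_le_span_singleton.mpr (dvd_pow_self P hn.ne')
  set mkA : K[X] →ₐ[K] AdjoinRoot (P ^ n) :=
    Ideal.Quotient.mkₐ K (Ideal.span {P ^ n}) with hmkA
  set I : Ideal (AdjoinRoot (P ^ n)) := (Ideal.span {P}).map mkA with hI
  have hIspan : I = Ideal.span {mkA P} := by
    rw [hI, Ideal.map_span, Set.image_singleton]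
  have hmkPn : mkA (P ^ n) = 0 := by
    show Ideal.Quotient.mk (Ideal.span {P ^ n}) (P ^ n) = 0
    rw [Ideal.Quotient.eq_zero_iff_mem]
    exact Ideal.mem_span_singleton_self _
  have hIn : I ^ n = ⊥ := by
    rw [hIspan, Ideal.span_singleton_pow, ← map_pow, hmkPn, Ideal.span_singleton_eq_bot.mpr rfl]
  have hInil : IsNilpotent I := ⟨n, hIn⟩
  have e : (AdjoinRoot (P ^ n) ⧸ I) ≃ₐ[K] AdjoinRoot P := by
    exact DoubleQuot.quotQuotEquivQuotOfLEₐ K hle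
  set lft : AdjoinRoot P →ₐ[K] AdjoinRoot (P ^ n) :=
    Algebra.FormallySmooth.lift I hInil e.symm.toAlgHom with hlftdef
  have hlft : ∀ x : AdjoinRoot P, Ideal.Quotient.mk I (lft x) = e.symm x := fun x =>
    Algebra.FormallySmooth.mk_lift I hInil e.symm.toAlgHom x
  set φ : (AdjoinRoot P)[X] →ₐ[K] AdjoinRoot (P ^ n) := aevalTower lft (mkA P) with hφ
  -- surjectivity of φ
  have key : ∀ a : AdjoinRoot (P ^ n), ∃ s ∈ φ.range, a - s ∈ I := by
    intro a
    refine ⟨lft (e (Ideal.Quotient.mk I a)), (AlgHom.mem_range _).mpr ⟨C _, aevalTower_C _ _ _⟩, ?_⟩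
    rw [← Ideal.Quotient.eq_zero_iff_mem, map_sub, hlft, AlgEquiv.symm_apply_apply,
      sub_self]
  have step : ∀ k, ∀ a : AdjoinRoot (P ^ n), ∃ s ∈ φ.range, a - s ∈ I ^ k := by
    intro k
    induction k with
    | zero => intro a; exact ⟨0, zero_mem _, by simp⟩
    | succ k ih =>
      intro a
      obtain ⟨s, hs, hmem⟩ := ih a
      rw [hIspan, Ideal.span_singleton_pow, Ideal.mem_span_singleton'] at hmem
      obtain ⟨r, hr⟩ := hmem
      obtain ⟨s', hs', hmem'⟩ := key r
      rw [hIspan, Ideal.mem_span_singleton'] at hmem'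
      obtain ⟨c, hc⟩ := hmem'
      have hpmem : mkA P ∈ φ.range := (AlgHom.mem_range _).mpr ⟨X, aevalTower_X _ _⟩
      refine ⟨s + s' * mkA P ^ k, ?_, ?_⟩
      · exact add_mem hs (mul_mem hs' (pow_mem hpmem k))
      · rw [hIspan, Ideal.span_singleton_pow, Ideal.mem_span_singleton']
        refine ⟨c, ?_⟩
        have h1 : a - (s + s' * mkA P ^ k) = (r - s') * mkA P ^ k := by
          rw [sub_mul, hr]; ring
        rw [h1, ← hc, pow_succ]; ring
  have hsurj : Function.Surjective φ := by
    intro a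
    obtain ⟨s, hs, hmem⟩ := step n a
    rw [hIn, Ideal.mem_bot, sub_eq_zero] at hmem
    obtain ⟨f, hf⟩ := (AlgHom.mem_range _).mp hs
    exact ⟨f, by rw [hf]; exact hmem.symm⟩
  -- φ kills X^n
  have hker : ∀ f ∈ Ideal.span {(X : (AdjoinRoot P)[X]) ^ n}, φ f = 0 := by
    intro f hf
    obtain ⟨c, rfl⟩ := Ideal.mem_span_singleton.mp hf
    rw [map_mul, map_pow, hφ, aevalTower_X, ← map_pow, hmkPn, zero_mul]
  set ψ : ((AdjoinRoot P)[X] ⧸ Ideal.span {(X : (AdjoinRoot P)[X]) ^ n})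
      →ₐ[K] AdjoinRoot (P ^ n) :=
    Ideal.Quotient.liftₐ _ φ hker with hψ
  have hψsurj : Function.Surjective ψ := by
    intro a
    obtain ⟨f, hf⟩ := hsurj a
    refine ⟨Ideal.Quotient.mk _ f, ?_⟩
    rw [hψ, Ideal.Quotient.liftₐ_apply]
    exact hf
  -- dimension count
  have hXn : (X : (AdjoinRoot P)[X]) ^ n ≠ 0 := pow_ne_zero n X_ne_zero
  haveI : Module.Finite (AdjoinRoot P)
      ((AdjoinRoot P)[X] ⧸ Ideal.span {(X : (AdjoinRoot P)[X]) ^ n}) :=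
    (AdjoinRoot.powerBasis hXn).finite
  haveI : Module.Finite K
      ((AdjoinRoot P)[X] ⧸ Ideal.span {(X : (AdjoinRoot P)[X]) ^ n}) :=
    Module.Finite.trans (AdjoinRoot P) _
  haveI : Module.Finite K (AdjoinRoot (P ^ n)) := (AdjoinRoot.powerBasis hPn).finite
  have hdim : Module.finrank K ((AdjoinRoot P)[X] ⧸ Ideal.span {(X : (AdjoinRoot P)[X]) ^ n}) =
      Module.finrank K (AdjoinRoot (P ^ n)) := by
    have h1 : Module.finrank K (AdjoinRoot (P ^ n)) = n * P.natDegree := by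
      have := (AdjoinRoot.powerBasis hPn).finrank
      rw [AdjoinRoot.powerBasis_dim, natDegree_pow] at this
      exact this
    have h2 : Module.finrank (AdjoinRoot P)
        ((AdjoinRoot P)[X] ⧸ Ideal.span {(X : (AdjoinRoot P)[X]) ^ n}) = n := by
      have := (AdjoinRoot.powerBasis hXn).finrank
      rw [AdjoinRoot.powerBasis_dim, natDegree_X_pow] at this
      exact this
    have h3 : Module.finrank K (AdjoinRoot P) = P.natDegree := by
      have := (AdjoinRoot.powerBasis hP0).finrank
      rw [AdjoinRoot.powerBasis_dim] at this
      exact this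
    rw [h1, ← Module.finrank_mul_finrank K (AdjoinRoot P)
      ((AdjoinRoot P)[X] ⧸ Ideal.span {(X : (AdjoinRoot P)[X]) ^ n}), h2, h3, mul_comm]
  have hψinj : Function.Injective ψ :=
    (LinearMap.injective_iff_surjective_of_finrank_eq_finrank hdim
      (f := ψ.toLinearMap)).mpr hψsurj
  exact ⟨(AlgEquiv.ofBijective ψ ⟨hψinj, hψsurj⟩).symm⟩

/-- For a perfect field `K`, an irreducible `P ∈ K[X]` and `n ≥ 0`,
the `K`-algebra `K[X]/(Pⁿ)` is isomorphic to `(K[X]/(P))[Y]/(Yⁿ)`. -/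
theorem stmt10 {K : Type*} [Field K] [PerfectField K]
    (P : K[X]) (hP : Irreducible P) (n : ℕ) :
    letI : CommRing (K[X] ⧸ Ideal.span {P}) := Ideal.Quotient.commRing _
    Nonempty
      ((K[X] ⧸ Ideal.span {P ^ n}) ≃ₐ[K]
        ((K[X] ⧸ Ideal.span {P})[X] ⧸
          Ideal.span {(X : (K[X] ⧸ Ideal.span {P})[X]) ^ n})) := by
  letI : CommRing (K[X] ⧸ Ideal.span {P}) := Ideal.Quotient.commRing _
  rcases Nat.eq_zero_or_pos n with rfl | hn
  · have h1 : (Ideal.span {P ^ 0} : Ideal K[X]) = ⊤ := by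
      simp [Ideal.span_singleton_one]
    have h2 : (Ideal.span {(X : (K[X] ⧸ Ideal.span {P})[X]) ^ 0}) = ⊤ := by
      simp [Ideal.span_singleton_one]
    haveI : Subsingleton (K[X] ⧸ Ideal.span {P ^ 0}) :=
      Ideal.Quotient.subsingleton_iff.mpr h1
    haveI : Subsingleton ((K[X] ⧸ Ideal.span {P})[X] ⧸
        Ideal.span {(X : (K[X] ⧸ Ideal.span {P})[X]) ^ 0}) :=
      Ideal.Quotient.subsingleton_iff.mpr h2
    exact ⟨{ toFun := fun _ => 0
             invFun := fun _ => 0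
             left_inv := fun x => Subsingleton.elim _ _
             right_inv := fun x => Subsingleton.elim _ _
             map_mul' := fun _ _ => Subsingleton.elim _ _
             map_add' := fun _ _ => Subsingleton.elim _ _
             commutes' := fun _ => Subsingleton.elim _ _ }⟩
  · exact aux10 P hP n hn
end

section
/- Let K be a perfect field and A a quotient K-algebra K[X]/(P) for a nonzero polynomial P. Then A is isomorphic as a K-algebra to a finite product ∏_i ∏_j (L_i[X]/(X^j))^{n_{i,j}}, where L_1, ..., L_k are pairwise non-isomorphic (as K-algebras) finite field extensions of K and the n_{i,j} are non-negative integers with Σ_j n_{i,j} at most the number of monic irreducible polynomials Q with K[X]/(Q) ≅ L_i. -/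
open Polynomial



set_option maxHeartbeats 1000000 in
set_option synthInstance.maxHeartbeats 400000 in
theorem key_equiv {K : Type*} [Field K] [PerfectField K] (Q : K[X]) (hQm : Q.Monic)
    (hQ : Irreducible Q) (m : ℕ) (hm : m ≠ 0) :
    Nonempty ((K[X] ⧸ Ideal.span {Q ^ m}) ≃ₐ[K]
      (@HasQuotient.Quotient (K[X] ⧸ Ideal.span {Q})[X] _ Ideal.instHasQuotient_1
        (Ideal.span {(X : (K[X] ⧸ Ideal.span {Q})[X]) ^ m}))) := by
  classical
  let L : Type _ := K[X] ⧸ Ideal.span {Q}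
  let R : Type _ := K[X] ⧸ Ideal.span {Q ^ m}
  let mkR : K[X] →+* R := Ideal.Quotient.mk _
  let x : R := mkR X
  let q : R := mkR Q
  have hqm : q ^ m = 0 := by
    show mkR Q ^ m = 0
    rw [← map_pow]
    exact Ideal.Quotient.eq_zero_iff_mem.mpr (Ideal.subset_span rfl)
  have hsep : IsCoprime Q (derivative Q) := PerfectField.separable_of_irreducible hQ
  have haeval : ∀ p : K[X], aeval x p = mkR p := by
    intro p
    have h := Polynomial.aeval_algHom_apply (Ideal.Quotient.mkₐ K (Ideal.span {Q ^ m})) X p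
    rw [aeval_X_left_apply] at h
    simpa [Ideal.Quotient.mkₐ_eq_mk] using h
  have newton : ∀ s : ℕ, ∃ β : R, x - β ∈ Ideal.span {q} ∧
      aeval β Q ∈ Ideal.span {q ^ (s + 1)} := by
    intro s
    induction s with
    | zero =>
      refine ⟨x, by simp, ?_⟩
      rw [haeval, pow_one]
      exact Ideal.subset_span rfl
    | succ s ih =>
      obtain ⟨β, hβ1, hβ2⟩ := ih
      obtain ⟨a, b, hab⟩ := hsep
      have hqd : q ∣ aeval β Q :=
        (dvd_pow_self q (Nat.succ_ne_zero s)).trans (Ideal.mem_span_singleton.mp hβ2)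
      have hnil : IsNilpotent (aeval β Q) := by
        obtain ⟨c, hc⟩ := hqd
        exact ⟨m, by rw [hc, mul_pow, hqm, zero_mul]⟩
      have h1 : aeval β a * aeval β Q + aeval β b * aeval β (derivative Q) = 1 := by
        have := congrArg (aeval β) hab
        simpa using this
      have hu : IsUnit (aeval β (derivative Q)) := by
        have h2 : IsUnit (aeval β b * aeval β (derivative Q)) := by
          have h3 : aeval β b * aeval β (derivative Q) = 1 - aeval β a * aeval β Q := by
            linear_combination h1
          rw [h3]
          exact ((Commute.all _ _).isNilpotent_mul_left hnil).isUnit_one_sub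
        exact isUnit_of_mul_isUnit_right h2
      obtain ⟨u, hu'⟩ : ∃ u : R, u * aeval β (derivative Q) = 1 := by
        obtain ⟨v, hv⟩ := hu.exists_left_inv
        exact ⟨v, hv⟩
      refine ⟨β - aeval β Q * u, ?_, ?_⟩
      · have hmem : aeval β Q * u ∈ Ideal.span {q} :=
          Ideal.mem_span_singleton.mpr (hqd.mul_right u)
        have h4 : x - (β - aeval β Q * u) = (x - β) + aeval β Q * u := by ring
        rw [h4]
        exact Ideal.add_mem _ hβ1 hmem
      · have hf : ∀ y : R, (Q.map (algebraMap K R)).eval y = aeval y Q := fun y => by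
          rw [Polynomial.eval_map, Polynomial.aeval_def]
        have hf' : ∀ y : R, (Q.map (algebraMap K R)).derivative.eval y
            = aeval y (derivative Q) := fun y => by
          rw [Polynomial.derivative_map, Polynomial.eval_map, Polynomial.aeval_def]
        obtain ⟨c, hc⟩ := Polynomial.binomExpansion (Q.map (algebraMap K R)) β
          (-(aeval β Q * u))
        have key : aeval (β - aeval β Q * u) Q = c * (aeval β Q * u) ^ 2 := by
          have h2 : β - aeval β Q * u = β + -(aeval β Q * u) := by ring
          rw [← hf, h2, hc, hf, hf']
          linear_combination (-(aeval β Q)) * hu'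
        obtain ⟨cc, hcc⟩ := Ideal.mem_span_singleton.mp hβ2
        refine Ideal.mem_span_singleton.mpr ⟨c * (cc * u) ^ 2 * q ^ s, ?_⟩
        rw [key, hcc]
        ring
  obtain ⟨β, hβx, hβ0'⟩ := newton (m - 1)
  have hβ0 : aeval β Q = 0 := by
    obtain ⟨c, hc⟩ := Ideal.mem_span_singleton.mp hβ0'
    rw [hc, Nat.sub_add_cancel (Nat.one_le_iff_ne_zero.mpr hm), hqm, zero_mul]
  let ψ : L →ₐ[K] R := Ideal.Quotient.liftₐ (Ideal.span {Q}) (aeval β) (by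
    intro a ha
    obtain ⟨c, hc⟩ := Ideal.mem_span_singleton.mp ha
    rw [hc, map_mul, hβ0, zero_mul])
  let Θ : L[X] →ₐ[K] R :=
    { Polynomial.eval₂RingHom (ψ : L →+* R) (x - β) with
      commutes' := fun r => by
        simp only [RingHom.toMonoidHom_eq_coe, OneHom.toFun_eq_coe, MonoidHom.toOneHom_coe,
          MonoidHom.coe_coe, coe_eval₂RingHom, Polynomial.algebraMap_apply, eval₂_C]
        exact ψ.commutes r }
  have hΘapp : ∀ p : L[X], Θ p = Polynomial.eval₂ (ψ : L →+* R) (x - β) p := fun p => rfl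
  have hxb : q ∣ (x - β) := Ideal.mem_span_singleton.mp hβx
  have hXm : Θ ((X : L[X]) ^ m) = 0 := by
    rw [map_pow, hΘapp, eval₂_X]
    obtain ⟨c, hc⟩ := hxb
    rw [hc, mul_pow, hqm, zero_mul]
  let Φ : (@HasQuotient.Quotient L[X] _ Ideal.instHasQuotient_1 (Ideal.span {(X : L[X]) ^ m})) →ₐ[K] R :=
    Ideal.Quotient.liftₐ _ Θ (by
      intro a ha
      obtain ⟨c, hc⟩ := Ideal.mem_span_singleton.mp ha
      rw [hc, map_mul, hXm, zero_mul])
  have hΦ : ∀ p : L[X], Φ (Ideal.Quotient.mk _ p) = Θ p := fun p =>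
    Ideal.Quotient.liftₐ_apply _ _ _ _
  have hx : x ∈ Φ.range := by
    refine ⟨Ideal.Quotient.mk _
      (Polynomial.C (Ideal.Quotient.mk (Ideal.span {Q}) X) + X), ?_⟩
    show Φ (Ideal.Quotient.mk _ (Polynomial.C (Ideal.Quotient.mk (Ideal.span {Q}) X) + X)) = x
    rw [hΦ, map_add, hΘapp, hΘapp, eval₂_C, eval₂_X]
    have hψX : (ψ : L →+* R) (Ideal.Quotient.mk (Ideal.span {Q}) X) = β := by
      show ψ (Ideal.Quotient.mk (Ideal.span {Q}) X) = β
      rw [show ψ (Ideal.Quotient.mk (Ideal.span {Q}) X)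
        = aeval β (X : K[X]) from Ideal.Quotient.liftₐ_apply _ _ _ _, aeval_X]
    rw [hψX]
    ring
  have hsurj : Function.Surjective Φ := by
    have htop : (⊤ : Subalgebra K R) ≤ Φ.range := by
      intro r _
      obtain ⟨p, rfl⟩ := Ideal.Quotient.mk_surjective r
      rw [show (Ideal.Quotient.mk (Ideal.span {Q ^ m})) p = aeval x p from (haeval p).symm]
      have h1 : Algebra.adjoin K {x} ≤ Φ.range :=
        Algebra.adjoin_le (Set.singleton_subset_iff.mpr hx)
      exact h1 (Polynomial.aeval_mem_adjoin_singleton K x)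
    intro r
    obtain ⟨a, ha⟩ := htop (Algebra.mem_top (A := R) (x := r))
    exact ⟨a, ha⟩
  -- dimension count
  have hQ0 : Q.natDegree ≠ 0 := hQ.natDegree_pos.ne'
  haveI hmax : (Ideal.span {Q}).IsMaximal := PrincipalIdealRing.isMaximal_of_irreducible hQ
  letI : Field L := Ideal.Quotient.field _
  haveI : Module.Finite K R :=
    Module.Finite.of_basis (AdjoinRoot.powerBasis' (hQm.pow m)).basis
  haveI : Module.Finite K L :=
    Module.Finite.of_basis (AdjoinRoot.powerBasis' hQm).basis
  haveI : Module.Finite L (@HasQuotient.Quotient L[X] _ Ideal.instHasQuotient_1 (Ideal.span {(X : L[X]) ^ m})) :=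
    Module.Finite.of_basis (AdjoinRoot.powerBasis' (monic_X_pow (R := L) m)).basis
  haveI : Module.Finite K (@HasQuotient.Quotient L[X] _ Ideal.instHasQuotient_1 (Ideal.span {(X : L[X]) ^ m})) :=
    Module.Finite.trans L _
  have hfinR : Module.finrank K R = Q.natDegree * m := by
    have h : Module.finrank K R = (Q ^ m).natDegree :=
      (AdjoinRoot.powerBasis' (hQm.pow m)).finrank
    rw [natDegree_pow] at h
    rw [h, mul_comm]
  have hfinL : Module.finrank K L = Q.natDegree :=
    (AdjoinRoot.powerBasis' hQm).finrank
  have hfinT : Module.finrank L (@HasQuotient.Quotient L[X] _ Ideal.instHasQuotient_1 (Ideal.span {(X : L[X]) ^ m})) = m := by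
    have h : Module.finrank L (@HasQuotient.Quotient L[X] _ Ideal.instHasQuotient_1 (Ideal.span {(X : L[X]) ^ m}))
        = ((X : L[X]) ^ m).natDegree :=
      (AdjoinRoot.powerBasis' (monic_X_pow (R := L) m)).finrank
    rwa [natDegree_X_pow] at h
  have hdim : Module.finrank K (@HasQuotient.Quotient L[X] _ Ideal.instHasQuotient_1 (Ideal.span {(X : L[X]) ^ m}))
      = Module.finrank K R := by
    rw [hfinR, ← Module.finrank_mul_finrank K L (@HasQuotient.Quotient L[X] _ Ideal.instHasQuotient_1 (Ideal.span {(X : L[X]) ^ m})),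
      hfinL, hfinT]
  have hinj : Function.Injective Φ :=
    (LinearMap.injective_iff_surjective_of_finrank_eq_finrank (f := Φ.toLinearMap) hdim).mpr
      hsurj
  have hbij : Function.Bijective Φ := ⟨hinj, hsurj⟩
  exact ⟨(AlgEquiv.ofBijective Φ hbij).symm⟩

noncomputable def algPiCurry (K : Type*) [CommSemiring K] {ι : Type*} {κ : ι → Type*}
    (A : (Σ i, κ i) → Type*) [∀ σ, Semiring (A σ)] [∀ σ, Algebra K (A σ)] :
    (∀ σ, A σ) ≃ₐ[K] ∀ i j, A ⟨i, j⟩ where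
  toFun f i j := f ⟨i, j⟩
  invFun f σ := f σ.1 σ.2
  left_inv _ := rfl
  right_inv _ := rfl
  map_mul' _ _ := rfl
  map_add' _ _ := rfl
  commutes' _ := rfl

noncomputable def algPiCongrLeft' (K : Type*) [CommSemiring K] {ι ι' : Type*} (A : ι → Type*)
    [∀ i, Semiring (A i)] [∀ i, Algebra K (A i)] (e : ι ≃ ι') :
    (∀ i, A i) ≃ₐ[K] ∀ b, A (e.symm b) where
  toFun := Equiv.piCongrLeft' A e
  invFun := (Equiv.piCongrLeft' A e).symm
  left_inv := (Equiv.piCongrLeft' A e).left_inv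
  right_inv := (Equiv.piCongrLeft' A e).right_inv
  map_mul' _ _ := rfl
  map_add' _ _ := rfl
  commutes' _ := rfl

noncomputable def polyQuotCongr {K A B : Type*} [CommSemiring K] [CommRing A] [CommRing B]
    [Algebra K A] [Algebra K B] (φ : A ≃ₐ[K] B) (m : ℕ) :
    (A[X] ⧸ Ideal.span {(X : A[X]) ^ m}) ≃ₐ[K] (B[X] ⧸ Ideal.span {(X : B[X]) ^ m}) :=
  Ideal.quotientEquivAlg _ _ (Polynomial.mapAlgEquiv φ) (by
    rw [Ideal.map_span, Set.image_singleton]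
    congr 1
    simp [Polynomial.coe_mapAlgEquiv])

/-- Algebra version of the Dedekind-domain Chinese remainder theorem. -/
noncomputable def crtAlgEquiv {K R : Type*} [CommSemiring K] [CommRing R] [IsDedekindDomain R]
    [Algebra K R] {ι : Type*} [Fintype ι] (I : Ideal R) (Pr : ι → Ideal R) (e : ι → ℕ)
    (prime : ∀ i, Prime (Pr i)) (coprime : Pairwise fun i j => Pr i ≠ Pr j)
    (prod_eq : ∏ i, Pr i ^ e i = I) :
    (R ⧸ I) ≃ₐ[K] ∀ i, R ⧸ Pr i ^ e i :=
  AlgEquiv.ofRingEquiv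
    (f := IsDedekindDomain.quotientEquivPiOfProdEq I Pr e prime coprime prod_eq)
    (fun r => rfl)

set_option maxHeartbeats 1000000 in
set_option synthInstance.maxHeartbeats 400000 in
/-- Over a perfect field `K`, any quotient algebra `K[X]/(P)` (with
`P ≠ 0`) is isomorphic as a `K`-algebra to a finite product
`∏ i ∏ j (Lᵢ[X]/(X^(j+1)))^(n i j)`, where the `Lᵢ = K[X]/(Qᵢ)` are pairwise
non-isomorphic (as `K`-algebras) finite field extensions of `K` (given by monic
irreducible `Qᵢ`), and `∑ j, n i j` is at most the number of monic irreducible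
polynomials `q` with `K[X]/(q) ≅ Lᵢ`. -/
theorem stmt12 {K : Type*} [Field K] [PerfectField K] (P : K[X]) (hP : P ≠ 0) :
    ∃ (k d : ℕ) (Q : Fin k → K[X]) (n : Fin k → Fin d → ℕ),
      (∀ i, (Q i).Monic ∧ Irreducible (Q i)) ∧
      (∀ i i', Nonempty ((K[X] ⧸ Ideal.span {Q i}) ≃ₐ[K] (K[X] ⧸ Ideal.span {Q i'}))
        → i = i') ∧
      (∀ i, (∑ j, (n i j : Cardinal)) ≤
        Cardinal.mk {q : K[X] // q.Monic ∧ Irreducible q ∧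
          Nonempty ((K[X] ⧸ Ideal.span {q}) ≃ₐ[K] (K[X] ⧸ Ideal.span {Q i}))}) ∧
      Nonempty ((K[X] ⧸ Ideal.span {P}) ≃ₐ[K]
        ∀ (i : Fin k) (j : Fin d), Fin (n i j) →
          (@HasQuotient.Quotient (K[X] ⧸ Ideal.span {Q i})[X] _ Ideal.instHasQuotient_1
            (Ideal.span {(X : (K[X] ⧸ Ideal.span {Q i})[X]) ^ ((j : ℕ) + 1)}))) := by
  classical
  let fs : Multiset K[X] := UniqueFactorizationMonoid.normalizedFactors P
  have hirr : ∀ r ∈ fs, Irreducible r := fun r hr =>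
    UniqueFactorizationMonoid.irreducible_of_normalized_factor r hr
  have hmonic : ∀ r ∈ fs, r.Monic := fun r hr => by
    have h1 := UniqueFactorizationMonoid.normalize_normalized_factor r hr
    rw [← h1]
    exact Polynomial.monic_normalize (hirr r hr).ne_zero
  have hassoc : Associated fs.prod P := UniqueFactorizationMonoid.prod_normalizedFactors hP
  let T : Finset K[X] := fs.toFinset
  let ι : Type _ := {r : K[X] // r ∈ T}
  have hmemfs : ∀ r : ι, r.1 ∈ fs := fun r => Multiset.mem_toFinset.mp r.2
  let e : ι → ℕ := fun r => fs.count r.1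
  have he : ∀ r : ι, e r ≠ 0 := fun r =>
    (Multiset.count_pos.mpr (hmemfs r)).ne'
  -- CRT
  have hprodeq : (∏ r : ι, (Ideal.span {r.1} : Ideal K[X]) ^ e r) = Ideal.span {P} := by
    have h1 : ∀ r : ι, (Ideal.span {r.1} : Ideal K[X]) ^ e r = Ideal.span {r.1 ^ e r} :=
      fun r => Ideal.span_singleton_pow r.1 (e r)
    rw [Finset.prod_congr rfl (fun r _ => h1 r), Ideal.prod_span_singleton]
    have h2 : (∏ r : ι, r.1 ^ e r) = fs.prod := by
      rw [show (∏ r : ι, r.1 ^ e r) = ∏ r ∈ T, r ^ fs.count r from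
        Finset.prod_coe_sort T (fun r => r ^ fs.count r)]
      exact (Finset.prod_multiset_count fs).symm
    rw [h2]
    exact Ideal.span_singleton_eq_span_singleton.mpr hassoc
  let crtA : (K[X] ⧸ Ideal.span {P}) ≃ₐ[K]
      ∀ r : ι, K[X] ⧸ (Ideal.span {r.1} : Ideal K[X]) ^ e r :=
    crtAlgEquiv _ _ _
      (fun r => Ideal.prime_of_isPrime
        (by rw [Ne, Ideal.span_singleton_eq_bot]; exact (hirr r.1 (hmemfs r)).ne_zero)
        ((Ideal.span_singleton_prime (hirr r.1 (hmemfs r)).ne_zero).mpr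
          (hirr r.1 (hmemfs r)).prime))
      (fun r r' hne => by
        intro hcon
        apply hne
        have h3 := Ideal.span_singleton_eq_span_singleton.mp hcon
        exact Subtype.ext (Polynomial.eq_of_monic_of_associated
          (hmonic r.1 (hmemfs r)) (hmonic r'.1 (hmemfs r')) h3))
      hprodeq
  -- per-factor equivalence
  let B : ι → Type _ := fun r =>
    @HasQuotient.Quotient (K[X] ⧸ Ideal.span {r.1})[X] _ Ideal.instHasQuotient_1
      (Ideal.span {(X : (K[X] ⧸ Ideal.span {r.1})[X]) ^ e r})
  have keyB : ∀ r : ι, Nonempty ((K[X] ⧸ (Ideal.span {r.1} : Ideal K[X]) ^ e r) ≃ₐ[K] B r) := by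
    intro r
    obtain ⟨E⟩ := key_equiv r.1 (hmonic r.1 (hmemfs r)) (hirr r.1 (hmemfs r)) (e r) (he r)
    exact ⟨(Ideal.quotientEquivAlgOfEq K (Ideal.span_singleton_pow r.1 (e r))).trans E⟩
  -- isomorphism classes
  let st : Setoid ι := ⟨fun r r' =>
    Nonempty ((K[X] ⧸ Ideal.span {r.1}) ≃ₐ[K] (K[X] ⧸ Ideal.span {r'.1})),
    ⟨fun _ => ⟨AlgEquiv.refl⟩, fun ⟨E⟩ => ⟨E.symm⟩, fun ⟨E⟩ ⟨F⟩ => ⟨E.trans F⟩⟩⟩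
  let Qt := Quotient st
  let k := Fintype.card Qt
  let eqk : Fin k ≃ Qt := (Fintype.equivFin Qt).symm
  let Q : Fin k → K[X] := fun i => ((eqk i).out : ι).1
  let d : ℕ := Multiset.card fs + 1
  have hed : ∀ r : ι, e r - 1 < d := fun r =>
    lt_of_le_of_lt (Nat.sub_le _ _) (Nat.lt_succ_of_le (Multiset.count_le_card _ _))
  let f : ι → Fin k × Fin d := fun r => (eqk.symm (Quotient.mk st r), ⟨e r - 1, hed r⟩)
  let n : Fin k → Fin d → ℕ := fun i j => Fintype.card {r : ι // f r = (i, j)}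
  have hQmem : ∀ i : Fin k, ((eqk i).out : ι).1 ∈ fs := fun i => hmemfs _
  have hQprop : ∀ i, (Q i).Monic ∧ Irreducible (Q i) := fun i =>
    ⟨hmonic _ (hQmem i), hirr _ (hQmem i)⟩
  have hiso_of_class : ∀ (r : ι) (i : Fin k), eqk.symm (Quotient.mk st r) = i →
      Nonempty ((K[X] ⧸ Ideal.span {r.1}) ≃ₐ[K] (K[X] ⧸ Ideal.span {Q i})) := by
    intro r i hri
    have h1 : Quotient.mk st r = eqk i := by
      rw [← hri, Equiv.apply_symm_apply]
    have h2 : Quotient.mk st ((eqk i).out) = eqk i := Quotient.out_eq _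
    exact Quotient.exact (h1.trans h2.symm)
  refine ⟨k, d, Q, n, hQprop, ?_, ?_, ?_⟩
  · -- distinctness
    intro i i' hE
    have h1 : Quotient.mk st ((eqk i).out) = Quotient.mk st ((eqk i').out) :=
      Quotient.sound hE
    rw [Quotient.out_eq, Quotient.out_eq] at h1
    exact eqk.injective h1
  · -- cardinal bound
    intro i
    have hcast : (∑ j, (n i j : Cardinal)) = ((∑ j, n i j : ℕ) : Cardinal) := by
      push_cast
      rfl
    rw [hcast]
    have hsum : (∑ j, n i j) = Fintype.card (Σ j : Fin d, {r : ι // f r = (i, j)}) := by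
      rw [Fintype.card_sigma]
    rw [hsum, ← Cardinal.mk_fintype]
    have hinj : ∃ F : (Σ j : Fin d, {r : ι // f r = (i, j)}) →
        {q : K[X] // q.Monic ∧ Irreducible q ∧
          Nonempty ((K[X] ⧸ Ideal.span {q}) ≃ₐ[K] (K[X] ⧸ Ideal.span {Q i}))},
        Function.Injective F := by
      refine ⟨fun σ => ⟨σ.2.1.1, hmonic _ (hmemfs σ.2.1), hirr _ (hmemfs σ.2.1),
        hiso_of_class σ.2.1 i (congrArg Prod.fst σ.2.2)⟩, ?_⟩
      rintro ⟨j, r, hr⟩ ⟨j', r', hr'⟩ hFF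
      have h0 : r.1 = r'.1 := by
        have h0' := congrArg Subtype.val hFF
        simpa using h0'
      have h1 : r = r' := Subtype.ext h0
      subst h1
      have h3 : j = j' := by
        have h4 := hr.symm.trans hr'
        exact congrArg Prod.snd h4
      subst h3
      rfl
    obtain ⟨F, hF⟩ := hinj
    exact Cardinal.mk_le_of_injective hF
  · -- the isomorphism
    let C : Fin k → Fin d → Type _ := fun i j =>
      @HasQuotient.Quotient (K[X] ⧸ Ideal.span {Q i})[X] _ Ideal.instHasQuotient_1
        (Ideal.span {(X : (K[X] ⧸ Ideal.span {Q i})[X]) ^ ((j : ℕ) + 1)})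
    have hcard : ∀ p : Fin k × Fin d, Fintype.card {r : ι // f r = p} = n p.1 p.2 := by
      rintro ⟨i, j⟩
      rfl
    let fib : ∀ p : Fin k × Fin d, Fin (n p.1 p.2) ≃ {r : ι // f r = p} := fun p =>
      (Fintype.equivFinOfCardEq (hcard p)).symm
    let gAssoc : (Σ i : Fin k, Σ j : Fin d, Fin (n i j)) ≃
        (Σ p : Fin k × Fin d, Fin (n p.1 p.2)) :=
      { toFun := fun σ => ⟨(σ.1, σ.2.1), σ.2.2⟩
        invFun := fun σ => ⟨σ.1.1, σ.1.2, σ.2⟩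
        left_inv := fun _ => rfl
        right_inv := fun _ => rfl }
    let g : (Σ i : Fin k, Σ j : Fin d, Fin (n i j)) ≃ ι :=
      gAssoc.trans ((Equiv.sigmaCongrRight fib).trans (Equiv.sigmaFiberEquiv f))
    have hgf : ∀ σ : (Σ i : Fin k, Σ j : Fin d, Fin (n i j)), f (g σ) = (σ.1, σ.2.1) := by
      rintro ⟨i, j, y⟩
      exact (fib (i, j) y).2
    have hEcomp : ∀ σ : (Σ i : Fin k, Σ j : Fin d, Fin (n i j)),
        Nonempty (B (g σ) ≃ₐ[K] C σ.1 σ.2.1) := by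
      rintro ⟨i, j, y⟩
      have hfr := hgf ⟨i, j, y⟩
      have hej : e (g ⟨i, j, y⟩) = (j : ℕ) + 1 := by
        have h5 : (⟨e (g ⟨i, j, y⟩) - 1, hed _⟩ : Fin d) = j := congrArg Prod.snd hfr
        have h6 : e (g ⟨i, j, y⟩) - 1 = (j : ℕ) := congrArg Fin.val h5
        have h7 := he (g ⟨i, j, y⟩)
        omega
      obtain ⟨φ⟩ := hiso_of_class (g ⟨i, j, y⟩) i (congrArg Prod.fst hfr)
      show Nonempty (@HasQuotient.Quotient (K[X] ⧸ Ideal.span {(g ⟨i, j, y⟩).1})[X] _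
        Ideal.instHasQuotient_1
        (Ideal.span {(X : (K[X] ⧸ Ideal.span {(g ⟨i, j, y⟩).1})[X]) ^ e (g ⟨i, j, y⟩)})
        ≃ₐ[K] C i j)
      rw [hej]
      exact ⟨polyQuotCongr φ ((j : ℕ) + 1)⟩
    have step2 : (∀ r : ι, K[X] ⧸ (Ideal.span {r.1} : Ideal K[X]) ^ e r) ≃ₐ[K]
        ∀ r : ι, B r :=
      AlgEquiv.piCongrRight fun r => Classical.choice (keyB r)
    have step3 : (∀ r : ι, B r) ≃ₐ[K]
        ∀ σ : (Σ i : Fin k, Σ j : Fin d, Fin (n i j)), B (g σ) :=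
      algPiCongrLeft' K B g.symm
    have step4 : (∀ σ : (Σ i : Fin k, Σ j : Fin d, Fin (n i j)), B (g σ)) ≃ₐ[K]
        ∀ σ : (Σ i : Fin k, Σ j : Fin d, Fin (n i j)), C σ.1 σ.2.1 :=
      AlgEquiv.piCongrRight fun σ => Classical.choice (hEcomp σ)
    have step5 : (∀ σ : (Σ i : Fin k, Σ j : Fin d, Fin (n i j)), C σ.1 σ.2.1) ≃ₐ[K]
        ∀ i, ∀ τ : (Σ j : Fin d, Fin (n i j)), C i τ.1 :=
      algPiCurry K (A := fun σ : (Σ i : Fin k, Σ j : Fin d, Fin (n i j)) => C σ.1 σ.2.1)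
    have step6 : (∀ i, ∀ τ : (Σ j : Fin d, Fin (n i j)), C i τ.1) ≃ₐ[K]
        ∀ i j, Fin (n i j) → C i j :=
      AlgEquiv.piCongrRight fun i =>
        algPiCurry K (A := fun τ : (Σ j : Fin d, Fin (n i j)) => C i τ.1)
    exact ⟨crtA.trans (step2.trans (step3.trans (step4.trans (step5.trans step6))))⟩
end

section
/- Let K be a field and L, L' finite field extensions of K. Then L[X]/(X^n) is isomorphic to L'[X]/(X^m) as K-algebras if and only if L ≅ L' as K-algebras and n = m. -/
open Polynomial

section aux
variable {K F : Type*} [Field K] [Field F] [Algebra K F] {n : ℕ}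

lemma aux_nilp (hn : 1 ≤ n) (a : F[X] ⧸ Ideal.span {(X : F[X]) ^ n})
    (ha : IsNilpotent a) : a ^ n = 0 := by
  obtain ⟨p, rfl⟩ := Ideal.Quotient.mk_surjective a
  obtain ⟨k, hk⟩ := ha
  rw [← map_pow, Ideal.Quotient.eq_zero_iff_mem, Ideal.mem_span_singleton] at hk
  have hXp : (X : F[X]) ∣ p := by
    have : (X : F[X]) ∣ p ^ k := dvd_trans (dvd_pow_self X (by omega)) hk
    exact (Polynomial.prime_X).dvd_of_dvd_pow this
  obtain ⟨q, rfl⟩ := hXp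
  rw [← map_pow, Ideal.Quotient.eq_zero_iff_mem, Ideal.mem_span_singleton,
    mul_pow]
  exact Dvd.intro _ rfl

lemma aux_pow (k : ℕ)
    (h : (Ideal.Quotient.mk (Ideal.span {(X : F[X]) ^ n}) X) ^ k = 0) : n ≤ k := by
  rw [← map_pow, Ideal.Quotient.eq_zero_iff_mem, Ideal.mem_span_singleton] at h
  exact (pow_dvd_pow_iff X_ne_zero Polynomial.not_isUnit_X).mp h

/-- eval at 0 as K-algebra hom out of the quotient -/
noncomputable def aux_eval (hn : 1 ≤ n) :
    (F[X] ⧸ Ideal.span {(X : F[X]) ^ n}) →ₐ[K] F :=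
  Ideal.Quotient.liftₐ _ ((Polynomial.aeval (0 : F)).restrictScalars K) (by
    intro p hp
    rw [Ideal.mem_span_singleton] at hp
    obtain ⟨q, rfl⟩ := hp
    simp [zero_pow (by omega : n ≠ 0)])

end aux

/-- For a field `K` and finite field extensions `L, L'` of `K`,
`L[X]/(Xⁿ)` and `L'[X]/(Xᵐ)` are isomorphic as `K`-algebras iff `L ≅ L'` as
`K`-algebras and `n = m`. -/
theorem stmt14 {K L L' : Type*} [Field K] [Field L] [Field L']
    [Algebra K L] [Algebra K L'] [FiniteDimensional K L] [FiniteDimensional K L']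
    (n m : ℕ) (hn : 1 ≤ n) (hm : 1 ≤ m) :
    Nonempty ((L[X] ⧸ Ideal.span {(X : L[X]) ^ n}) ≃ₐ[K]
        (L'[X] ⧸ Ideal.span {(X : L'[X]) ^ m})) ↔
      Nonempty (L ≃ₐ[K] L') ∧ n = m := by
  constructor
  · rintro ⟨e⟩
    constructor
    · -- residue fields via eval-at-0
      have χ : L →ₐ[K] L' :=
        (aux_eval hm).comp (e.toAlgHom.comp (IsScalarTower.toAlgHom K L _))
      have χ' : L' →ₐ[K] L :=
        (aux_eval hn).comp (e.symm.toAlgHom.comp (IsScalarTower.toAlgHom K L' _))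
      have hinj : Function.Injective χ := χ.toRingHom.injective
      have hinj' : Function.Injective χ' := χ'.toRingHom.injective
      have h1 : Module.finrank K L ≤ Module.finrank K L' :=
        LinearMap.finrank_le_finrank_of_injective (f := χ.toLinearMap) hinj
      have h2 : Module.finrank K L' ≤ Module.finrank K L :=
        LinearMap.finrank_le_finrank_of_injective (f := χ'.toLinearMap) hinj'
      have hsurj : Function.Surjective χ :=
        (LinearMap.injective_iff_surjective_of_finrank_eq_finrank
          (le_antisymm h1 h2) (f := χ.toLinearMap)).mp hinj
      exact ⟨AlgEquiv.ofBijective χ ⟨hinj, hsurj⟩⟩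
    · -- nilpotency index
      have hx : IsNilpotent (Ideal.Quotient.mk (Ideal.span {(X : L[X]) ^ n}) X) :=
        ⟨n, by rw [← map_pow, Ideal.Quotient.eq_zero_iff_mem]; exact
          Ideal.subset_span rfl⟩
      have hx' : IsNilpotent (Ideal.Quotient.mk (Ideal.span {(X : L'[X]) ^ m}) X) :=
        ⟨m, by rw [← map_pow, Ideal.Quotient.eq_zero_iff_mem]; exact
          Ideal.subset_span rfl⟩
      have hnm : n ≤ m := by
        have h1 := aux_nilp hm (e (Ideal.Quotient.mk _ X)) (hx.map e.toAlgHom.toRingHom)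
        rw [← map_pow] at h1
        exact aux_pow m (e.injective (by rw [h1, map_zero]))
      have hmn : m ≤ n := by
        have h1 := aux_nilp hn (e.symm (Ideal.Quotient.mk _ X)) (hx'.map e.symm.toAlgHom.toRingHom)
        rw [← map_pow] at h1
        exact aux_pow n (e.symm.injective (by rw [h1, map_zero]))
      omega
  · rintro ⟨⟨f⟩, rfl⟩
    refine ⟨Ideal.quotientEquivAlg _ _ (Polynomial.mapAlgEquiv f) ?_⟩
    rw [Ideal.map_span, Set.image_singleton]
    congr 1
    simp [Polynomial.mapAlgEquiv]
end

section
/- Let K be a perfect field, L a finite field extension of K, and n ≥ 1. If f is a K-algebra automorphism of L[X]/(X^n), then f maps L into L; that is, there exists σ_f ∈ Aut_K(L) (a field automorphism of L fixing K) such that f(a) = σ_f(a) for all a ∈ L. -/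
open Polynomial

section Aux

variable {K L : Type*} [Field K] [PerfectField K] [Field L] [Algebra K L]
    [FiniteDimensional K L]

/-- evaluation at 0 on the quotient -/
noncomputable def stmt17π (n : ℕ) (hn : 1 ≤ n) :
    (L[X] ⧸ Ideal.span {(X : L[X]) ^ n}) →ₐ[L] L :=
  Ideal.Quotient.liftₐ _ (aeval (0 : L)) (by
    intro p hp
    rw [Ideal.mem_span_singleton] at hp
    obtain ⟨q, rfl⟩ := hp
    simp [zero_pow (by omega : n ≠ 0)])

end Aux

/-- Let `K` be a perfect field, `L` a finite field extension of `K`,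
`n ≥ 1`. Every `K`-algebra automorphism `f` of `L[X]/(Xⁿ)` maps `L` into `L`:
there is `σ_f ∈ Aut_K(L)` with `f(a) = σ_f(a)` for all `a ∈ L`. -/
theorem stmt17 {K L : Type*} [Field K] [PerfectField K] [Field L] [Algebra K L]
    [FiniteDimensional K L] (n : ℕ) (hn : 1 ≤ n)
    (f : (L[X] ⧸ Ideal.span {(X : L[X]) ^ n}) ≃ₐ[K]
      (L[X] ⧸ Ideal.span {(X : L[X]) ^ n})) :
    ∃ σ : L ≃ₐ[K] L, ∀ a : L,
      f (algebraMap L (L[X] ⧸ Ideal.span {(X : L[X]) ^ n}) a) =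
        algebraMap L (L[X] ⧸ Ideal.span {(X : L[X]) ^ n}) (σ a) := by
  set A := L[X] ⧸ Ideal.span {(X : L[X]) ^ n} with hA
  let π : A →ₐ[L] L := stmt17π n hn
  have hπs : ∀ x : L, π (algebraMap L A x) = x := by
    intro x
    simp [π, stmt17π, Ideal.Quotient.liftₐ_apply]
  -- elements killed by π are nilpotent
  have hnil : ∀ z : A, π z = 0 → z ^ n = 0 := by
    intro z hz
    obtain ⟨p, rfl⟩ := Ideal.Quotient.mk_surjective z
    have hp : p.coeff 0 = 0 := by
      have : aeval (0 : L) p = 0 := hz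
      simpa [aeval_def, eval₂_at_zero, coeff_zero_eq_eval_zero] using this
    have hdvd : (X : L[X]) ^ n ∣ p ^ n :=
      pow_dvd_pow_of_dvd (X_dvd_iff.mpr hp) n
    rw [← map_pow, Ideal.Quotient.eq_zero_iff_mem, Ideal.mem_span_singleton]
    exact hdvd
  let σ' : L →ₐ[K] L := (π.restrictScalars K).comp
    ((f : A →ₐ[K] A).comp (IsScalarTower.toAlgHom K L A))
  refine ⟨AlgEquiv.ofBijective σ' σ'.bijective, fun a => ?_⟩
  -- notation
  set b : A := f (algebraMap L A a) with hb
  have hσ'a : σ' a = π b := rfl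
  set s : L := σ' a with hs
  set c : A := algebraMap L A s with hc
  show b = c
  set ν : A := b - c with hν
  have hπν : π ν = 0 := by
    rw [hν, map_sub, hπs, ← hσ'a, sub_self]
  have hνnil : IsNilpotent ν := ⟨n, hnil ν hπν⟩
  -- minimal polynomial of a
  set P : K[X] := minpoly K a with hP
  have hPa : aeval a P = 0 := minpoly.aeval K a
  have hPb : aeval b P = 0 := by
    show aeval ((f : A →ₐ[K] A) (algebraMap L A a)) P = 0
    rw [Polynomial.aeval_algHom_apply, Polynomial.aeval_algebraMap_apply, hPa,
      map_zero, map_zero]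
  have hPs : aeval s P = 0 := by
    show aeval (σ' a) P = 0
    rw [Polynomial.aeval_algHom_apply, hPa, map_zero]
  have hPc : aeval c P = 0 := by
    rw [hc, Polynomial.aeval_algebraMap_apply, hPs, map_zero]
  -- separability: derivative doesn't vanish at s
  have hsep : P.Separable := Algebra.IsSeparable.isSeparable K a
  have hder : aeval s (derivative P) ≠ 0 := by
    obtain ⟨u, v, huv⟩ := hsep
    intro h0
    have := congrArg (aeval s) huv
    simp [hPs, h0, map_add, map_mul] at this
  -- the derivative evaluated at c is a unit
  have hu : IsUnit (aeval c (derivative P)) := by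
    rw [hc, Polynomial.aeval_algebraMap_apply]
    exact (isUnit_iff_ne_zero.mpr hder).map (algebraMap L A)
  -- binomial expansion
  set Q : A[X] := P.map (algebraMap K A) with hQ
  obtain ⟨k, hk⟩ := Q.binomExpansion c ν
  have hQc : Q.eval c = 0 := by rw [hQ, eval_map, ← aeval_def, hPc]
  have hQb : Q.eval (c + ν) = 0 := by
    have : c + ν = b := by rw [hν]; ring
    rw [this, hQ, eval_map, ← aeval_def, hPb]
  have hQ' : Q.derivative.eval c = aeval c (derivative P) := by
    rw [hQ, derivative_map, eval_map, ← aeval_def]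
  rw [hQb, hQc, hQ', zero_add] at hk
  -- 0 = u * ν + k * ν^2 = ν * (u + k * ν)
  have key : ν * (aeval c (derivative P) + k * ν) = 0 := by
    linear_combination -hk
  have hw : IsUnit (aeval c (derivative P) + k * ν) :=
    IsNilpotent.isUnit_add_left_of_commute ((Commute.all k ν).isNilpotent_mul_left hνnil)
      hu (Commute.all _ _)
  have hν0 : ν = 0 := hw.mul_left_eq_zero.mp key
  have : b = c := by rw [← sub_eq_zero]; exact hν0
  exact this
end

section
/- Let K be a perfect field, L a finite field extension of K, and n ≥ 1. Every σ ∈ Aut_K(L) extends uniquely to a K-algebra automorphism σ^X of L[X]/(X^n) with σ^X(a) = σ(a) for a ∈ L and σ^X(X) = X, and the group Aut_K(L[X]/(X^n)) is the semidirect product of its normal subgroup Aut_L(L[X]/(X^n)) with the subgroup {σ^X : σ ∈ Aut_K(L)} ≅ Aut_K(L), where σ acts on Aut_L(L[X]/(X^n)) by f ↦ σ^X ∘ f ∘ (σ^X)⁻¹. -/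
open Polynomial

/-- The truncated polynomial algebra `L[X]/(Xⁿ)`. -/
abbrev TruncPoly (L : Type*) [Field L] (n : ℕ) :=
  L[X] ⧸ Ideal.span {(X : L[X]) ^ n}


section Aux

variable {K L : Type*} [Field K] [Field L] [Algebra K L] (n : ℕ)

lemma TP.algebraMap_eq (a : L) :
    algebraMap L (TruncPoly L n) a = Ideal.Quotient.mk _ (C a) := by
  rw [IsScalarTower.algebraMap_apply L L[X] (TruncPoly L n)]
  rfl

lemma TP.algebraMapK_eq (k : K) :
    algebraMap K (TruncPoly L n) k = Ideal.Quotient.mk _ (C (algebraMap K L k)) := by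
  rw [IsScalarTower.algebraMap_apply K L (TruncPoly L n), TP.algebraMap_eq]

/-- evaluation at 0, i.e. the residue map to `L`. -/
noncomputable def TP.pev (hn : 1 ≤ n) : TruncPoly L n →+* L :=
  Ideal.Quotient.lift _ (evalRingHom 0) (by
    intro p hp
    rw [Ideal.mem_span_singleton] at hp
    obtain ⟨q, rfl⟩ := hp
    simp [zero_pow (by omega : n ≠ 0)])

variable (hn : 1 ≤ n)

lemma TP.pev_mk (p : L[X]) : TP.pev n hn (Ideal.Quotient.mk _ p) = p.eval 0 := rfl

lemma TP.pev_alg (a : L) : TP.pev n hn (algebraMap L (TruncPoly L n) a) = a := by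
  rw [TP.algebraMap_eq, TP.pev_mk]; simp

lemma TP.alg_injective (hn : 1 ≤ n) : Function.Injective (algebraMap L (TruncPoly L n)) := by
  intro a b h
  have := congrArg (TP.pev n hn) h
  rwa [TP.pev_alg, TP.pev_alg] at this

lemma TP.nilpotent_of_pev_zero {r : TruncPoly L n} (h : TP.pev n hn r = 0) :
    IsNilpotent r := by
  obtain ⟨p, rfl⟩ := Ideal.Quotient.mk_surjective r
  rw [TP.pev_mk] at h
  obtain ⟨q, rfl⟩ : X ∣ p := X_dvd_iff.mpr (by rwa [← coeff_zero_eq_eval_zero] at h)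
  refine ⟨n, ?_⟩
  rw [← map_pow, Ideal.Quotient.eq_zero_iff_mem, mul_pow]
  exact Ideal.mem_span_singleton.mpr ⟨q ^ n, rfl⟩

end Aux

section Key

variable {K L : Type*} [Field K] [PerfectField K] [Field L] [Algebra K L]
    [FiniteDimensional K L] (n : ℕ) (hn : 1 ≤ n)

/-- the residue map as a `K`-algebra hom. -/
noncomputable def TP.pevAlg : TruncPoly L n →ₐ[K] L :=
  { TP.pev n hn with
    commutes' := fun k => by
      show TP.pev n hn (algebraMap K (TruncPoly L n) k) = _
      rw [TP.algebraMapK_eq, TP.pev_mk]; simp }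

omit [PerfectField K] [FiniteDimensional K L] in
lemma TP.pevAlg_apply (r : TruncPoly L n) : TP.pevAlg n hn (K := K) r = TP.pev n hn r := rfl

omit [PerfectField K] [FiniteDimensional K L] in
lemma TP.aeval_alg (b : L) (p : K[X]) :
    aeval (algebraMap L (TruncPoly L n) b) p
      = algebraMap L (TruncPoly L n) (aeval b p) := by
  simpa using aeval_algHom_apply (IsScalarTower.toAlgHom K L (TruncPoly L n)) b p

/-- Key lemma: every `K`-algebra automorphism maps the image of `L` into itself. -/
lemma TP.fix (g : TruncPoly L n ≃ₐ[K] TruncPoly L n) (a : L) :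
    g (algebraMap L (TruncPoly L n) a) =
      algebraMap L (TruncPoly L n)
        (TP.pev n hn (g (algebraMap L (TruncPoly L n) a))) := by
  set R := TruncPoly L n
  set alg := algebraMap L R
  set y := g (alg a) with hy_def
  set b := TP.pev n hn y with hb_def
  set m := y - alg b with hm_def
  have hm : IsNilpotent m := by
    refine TP.nilpotent_of_pev_zero n hn ?_
    rw [hm_def, map_sub, TP.pev_alg]
    exact sub_self _
  have hint : IsIntegral K a := Algebra.IsIntegral.isIntegral a
  set p := minpoly K a with hp_def
  have hsep : p.Separable := PerfectField.separable_of_irreducible (minpoly.irreducible hint)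
  have hy : aeval y p = 0 := by
    rw [hy_def, aeval_algHom_apply g (alg a) p]
    have : aeval (alg a) p = 0 := by
      rw [show (alg a : R) = algebraMap L R a from rfl, TP.aeval_alg, minpoly.aeval, map_zero]
    rw [this, map_zero]
  have hb : aeval b p = 0 := by
    have h := congrArg (TP.pevAlg n hn (K := K)) hy
    rw [← aeval_algHom_apply (TP.pevAlg n hn (K := K)) y p] at h
    rw [map_zero] at h
    rwa [TP.pevAlg_apply] at h
  -- now the Taylor argument
  set q : R[X] := p.map (algebraMap K R) with hq_def
  have hqe : ∀ z : R, q.eval z = aeval z p := fun z => by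
    rw [hq_def, eval_map, aeval_def]
  set T := taylor (alg b) q with hT_def
  have h0 : T.coeff 0 = 0 := by
    rw [hT_def, taylor_coeff_zero, hqe,
      show (alg b : R) = algebraMap L R b from rfl, TP.aeval_alg, hb, map_zero]
  obtain ⟨T₁, hT1⟩ : X ∣ T := X_dvd_iff.mpr h0
  have hd : aeval b (derivative p) ≠ 0 := by
    obtain ⟨u, v, huv⟩ := hsep
    intro h
    have := congrArg (aeval b) huv
    rw [map_add, map_mul, map_mul, hb, h, mul_zero, mul_zero, add_zero, map_one] at this
    exact zero_ne_one this
  have h1 : T₁.coeff 0 = alg (aeval b (derivative p)) := by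
    have : T.coeff 1 = T₁.coeff 0 := by rw [hT1, coeff_X_mul]
    rw [← this, hT_def, taylor_coeff_one, hq_def, Polynomial.derivative_map,
      eval_map, ← aeval_def,
      show (alg b : R) = algebraMap L R b from rfl, TP.aeval_alg]
  have hu : IsUnit (T₁.coeff 0) := by
    rw [h1]; exact (hd.isUnit).map (algebraMap L R)
  have heval : m * T₁.eval m = 0 := by
    have : T.eval m = 0 := by
      rw [hT_def, taylor_eval]
      have : m + alg b = y := by rw [hm_def, sub_add_cancel]
      rw [this, hqe, hy]
    rwa [hT1, eval_mul, eval_X] at this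
  obtain ⟨T₂, hT2⟩ : X ∣ (T₁ - C (T₁.coeff 0)) := X_dvd_iff.mpr (by simp)
  have hT1eval : T₁.eval m = T₁.coeff 0 + m * T₂.eval m := by
    have : T₁ = C (T₁.coeff 0) + X * T₂ := by rw [← hT2]; ring
    rw [this]; simp
  have hunit : IsUnit (T₁.eval m) := by
    rw [hT1eval]
    exact IsNilpotent.isUnit_add_left_of_commute
      ((Commute.all m (T₂.eval m)).isNilpotent_mul_right hm) hu (Commute.all _ _)
  have hm0 : m = 0 := (hunit.mul_left_eq_zero).mp heval
  have : y = alg b := by rwa [hm_def, sub_eq_zero] at hm0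
  exact this

end Key

section Ext

variable {K L : Type*} [Field K] [Field L] [Algebra K L] (n : ℕ)

lemma TP.span_map (σ : L ≃ₐ[K] L) :
    Ideal.span {(X : L[X]) ^ n} =
      (Ideal.span {(X : L[X]) ^ n}).map
        ((mapEquiv σ.toRingEquiv : L[X] ≃+* L[X]) : L[X] →+* L[X]) := by
  rw [Ideal.map_span, Set.image_singleton]
  congr 1
  simp [mapEquiv_apply, Polynomial.map_pow]

/-- The canonical extension of `σ` to the truncated polynomial ring. -/
noncomputable def TP.ext (σ : L ≃ₐ[K] L) : TruncPoly L n ≃ₐ[K] TruncPoly L n :=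
  AlgEquiv.ofRingEquiv
    (f := Ideal.quotientEquiv _ _ (mapEquiv σ.toRingEquiv) (TP.span_map n σ))
    (fun k => by
      rw [TP.algebraMapK_eq, Ideal.quotientEquiv_mk]
      simp [mapEquiv_apply])

lemma TP.ext_alg (σ : L ≃ₐ[K] L) (a : L) :
    TP.ext n σ (algebraMap L (TruncPoly L n) a) = algebraMap L (TruncPoly L n) (σ a) := by
  rw [TP.algebraMap_eq, TP.algebraMap_eq]
  show Ideal.quotientEquiv _ _ _ (TP.span_map n σ) (Ideal.Quotient.mk _ (C a)) = _
  rw [Ideal.quotientEquiv_mk]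
  simp [mapEquiv_apply]

lemma TP.ext_X (σ : L ≃ₐ[K] L) :
    TP.ext n σ (Ideal.Quotient.mk _ (X : L[X])) = Ideal.Quotient.mk _ (X : L[X]) := by
  show Ideal.quotientEquiv _ _ _ (TP.span_map n σ) (Ideal.Quotient.mk _ X) = _
  rw [Ideal.quotientEquiv_mk]
  simp [mapEquiv_apply]

lemma TP.ext_unique {g₁ g₂ : TruncPoly L n ≃ₐ[K] TruncPoly L n}
    (hC : ∀ a, g₁ (algebraMap L (TruncPoly L n) a) = g₂ (algebraMap L (TruncPoly L n) a))
    (hX : g₁ (Ideal.Quotient.mk _ (X : L[X])) = g₂ (Ideal.Quotient.mk _ (X : L[X]))) :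
    g₁ = g₂ := by
  have key : (g₁.toAlgHom.toRingHom).comp (Ideal.Quotient.mk (Ideal.span {(X : L[X]) ^ n}))
      = (g₂.toAlgHom.toRingHom).comp (Ideal.Quotient.mk (Ideal.span {(X : L[X]) ^ n})) := by
    apply Polynomial.ringHom_ext
    · intro a
      have := hC a
      rw [TP.algebraMap_eq] at this
      exact this
    · exact hX
  ext r
  obtain ⟨p, rfl⟩ := Ideal.Quotient.mk_surjective r
  exact RingHom.congr_fun key p

end Ext

/-- For `K` perfect, `L/K` finite and `n ≥ 1`: every `σ ∈ Aut_K(L)`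
extends uniquely to a `K`-algebra automorphism `σ^X` of `L[X]/(Xⁿ)` with
`σ^X(a) = σ(a)` on `L` and `σ^X(X) = X`; and for any such extension map `E`,
`Aut_K(L[X]/(Xⁿ))` is the semidirect product of the normal subgroup
`Aut_L(L[X]/(Xⁿ))` (the automorphisms fixing `L` pointwise) with the subgroup
`{σ^X}` ≅ `Aut_K(L)`: `E` is an injective homomorphism, the `L`-fixing
automorphisms form a normal subgroup coinciding with `Aut_L`, and every `f`
decomposes uniquely as `f = h * E σ` with `h` fixing `L` pointwise. -/
theorem stmt18 {K L : Type*} [Field K] [PerfectField K] [Field L] [Algebra K L]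
    [FiniteDimensional K L] (n : ℕ) (hn : 1 ≤ n) :
    (∀ σ : L ≃ₐ[K] L, ∃! g : TruncPoly L n ≃ₐ[K] TruncPoly L n,
      (∀ a : L, g (algebraMap L (TruncPoly L n) a) =
          algebraMap L (TruncPoly L n) (σ a)) ∧
      g (Ideal.Quotient.mk _ X) = Ideal.Quotient.mk _ X) ∧
    (∀ E : (L ≃ₐ[K] L) → (TruncPoly L n ≃ₐ[K] TruncPoly L n),
      (∀ σ : L ≃ₐ[K] L,
        (∀ a : L, E σ (algebraMap L (TruncPoly L n) a) =
            algebraMap L (TruncPoly L n) (σ a)) ∧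
        E σ (Ideal.Quotient.mk _ X) = Ideal.Quotient.mk _ X) →
      Function.Injective E ∧
      (∀ σ τ : L ≃ₐ[K] L, E (σ * τ) = E σ * E τ) ∧
      (∀ h : TruncPoly L n ≃ₐ[K] TruncPoly L n,
        (∀ a : L, h (algebraMap L (TruncPoly L n) a) =
            algebraMap L (TruncPoly L n) a) →
        (∃ h' : TruncPoly L n ≃ₐ[L] TruncPoly L n, ∀ x, h' x = h x) ∧
        (∀ g : TruncPoly L n ≃ₐ[K] TruncPoly L n, ∀ a : L,
          (g * h * g⁻¹) (algebraMap L (TruncPoly L n) a) =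
            algebraMap L (TruncPoly L n) a)) ∧
      (∀ f : TruncPoly L n ≃ₐ[K] TruncPoly L n,
        ∃! p : (TruncPoly L n ≃ₐ[K] TruncPoly L n) × (L ≃ₐ[K] L),
          (∀ a : L, p.1 (algebraMap L (TruncPoly L n) a) =
              algebraMap L (TruncPoly L n) a) ∧
          f = p.1 * E p.2)) := by
  constructor
  · intro σ
    refine ⟨TP.ext n σ, ⟨TP.ext_alg n σ, TP.ext_X n σ⟩, ?_⟩
    rintro g ⟨hga, hgX⟩
    exact TP.ext_unique n (fun a => by rw [hga a, TP.ext_alg]) (by rw [hgX, TP.ext_X])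
  · intro E hE
    refine ⟨?_, ?_, ?_, ?_⟩
    · intro σ τ h
      ext a
      apply TP.alg_injective n hn
      rw [← (hE σ).1 a, ← (hE τ).1 a, h]
    · intro σ τ
      apply TP.ext_unique n
      · intro a
        rw [(hE (σ * τ)).1 a, AlgEquiv.mul_apply (E σ) (E τ), (hE τ).1 a, (hE σ).1 (τ a),
          AlgEquiv.mul_apply]
      · rw [(hE (σ * τ)).2, AlgEquiv.mul_apply (E σ) (E τ), (hE τ).2, (hE σ).2]
    · intro h hfix
      constructor
      · exact ⟨AlgEquiv.ofRingEquiv (f := h.toRingEquiv) (fun a => hfix a), fun x => rfl⟩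
      · intro g a
        have hg : g.symm (algebraMap L (TruncPoly L n) a)
            = algebraMap L (TruncPoly L n)
                (TP.pev n hn (g.symm (algebraMap L (TruncPoly L n) a))) :=
          TP.fix n hn g.symm a
        rw [AlgEquiv.mul_apply, AlgEquiv.mul_apply]
        have hinv : (g⁻¹ : TruncPoly L n ≃ₐ[K] TruncPoly L n)
            (algebraMap L (TruncPoly L n) a) = g.symm (algebraMap L (TruncPoly L n) a) := rfl
        rw [hinv, hg, hfix, ← hg]
        exact g.apply_symm_apply _
    · intro f
      set s : L →ₐ[K] L := ((TP.pevAlg n hn (K := K)).comp f.toAlgHom).comp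
        (IsScalarTower.toAlgHom K L (TruncPoly L n)) with hs
      have hsb : Function.Bijective s := Algebra.IsAlgebraic.algHom_bijective s
      set σ : L ≃ₐ[K] L := AlgEquiv.ofBijective s hsb with hσ
      have hfσ : ∀ a, f (algebraMap L (TruncPoly L n) a)
          = algebraMap L (TruncPoly L n) (σ a) := fun a => TP.fix n hn f a
      have hEsymm : ∀ a, (E σ).symm (algebraMap L (TruncPoly L n) a)
          = algebraMap L (TruncPoly L n) (σ.symm a) := by
        intro a
        apply (E σ).injective
        rw [AlgEquiv.apply_symm_apply, (hE σ).1, AlgEquiv.apply_symm_apply]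
      have hhfix : ∀ a, (f * (E σ)⁻¹) (algebraMap L (TruncPoly L n) a)
          = algebraMap L (TruncPoly L n) a := by
        intro a
        rw [AlgEquiv.mul_apply]
        have : (E σ)⁻¹ (algebraMap L (TruncPoly L n) a)
            = (E σ).symm (algebraMap L (TruncPoly L n) a) := rfl
        rw [this, hEsymm, hfσ, AlgEquiv.apply_symm_apply]
      refine ⟨⟨f * (E σ)⁻¹, σ⟩, ⟨hhfix, by rw [inv_mul_cancel_right]⟩, ?_⟩
      rintro ⟨h₁, σ₁⟩ ⟨hfix₁, hfeq⟩
      have hσ1 : σ₁ = σ := by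
        ext a
        apply TP.alg_injective n hn
        have h2 : f (algebraMap L (TruncPoly L n) a)
            = algebraMap L (TruncPoly L n) (σ₁ a) := by
          rw [hfeq, AlgEquiv.mul_apply, (hE σ₁).1, hfix₁]
        rw [← h2, hfσ]
      have hh1 : h₁ = f * (E σ)⁻¹ := by
        rw [hfeq, hσ1, mul_inv_cancel_right]
      rw [hh1, hσ1]
end
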